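/- arXiv:1811.05831 — 12 statements merged into one kernel-verified Lean document; each statement's English description precedes it below -/
import Mathlib

section
/- Let E be a real inner product space, let α > 0, and let Ω ⊆ E be an α-strongly convex set. Let p ∈ E be a nonzero vector and let x_p ∈ Ω satisfy ⟨p, x_p⟩ ≥ ⟨p, y⟩ for all y ∈ Ω. Then for every y ∈ Ω one has ⟨p, x_p − y⟩ ≥ (α‖p‖/2)·‖x_p − y‖². -/
open RealInnerProductSpace

/-- A set `Ω` in a real inner product space is `α`-strongly convex if for all `u, v ∈ Ω`
and all `θ ∈ [0,1]`, every point at distance at most `θ(1−θ)(α/2)‖u−v‖²` from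
`θ•u + (1−θ)•v` belongs to `Ω`. -/
def StronglyConvexSet {E : Type*} [NormedAddCommGroup E] [InnerProductSpace ℝ E]
    (α : ℝ) (Ω : Set E) : Prop :=
  ∀ u ∈ Ω, ∀ v ∈ Ω, ∀ θ : ℝ, θ ∈ Set.Icc (0 : ℝ) 1 → ∀ y : E,
    ‖y - (θ • u + (1 - θ) • v)‖ ≤ θ * (1 - θ) * (α / 2) * ‖u - v‖ ^ 2 → y ∈ Ω

/-!
If `x` maximizes `⟪p, ·⟫` on `Ω` and `y ∈ Ω`, strong convexity puts the point
`θ • x + (1 - θ) • y` pushed by `θ(1-θ)(α/2)‖x-y‖²` in the direction of `p` inside `Ω`.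
Comparing its value with that of `x` gives `(1-θ)⟪p, x-y⟫ ≥ θ(1-θ)(α/2)‖p‖‖x-y‖²`;
divide by `1 - θ` and let `θ → 1`.
-/

open Filter Topology

section

variable {E : Type*} [NormedAddCommGroup E] [InnerProductSpace ℝ E]

lemma norm_inv_norm_smul_le_one (p : E) : ‖‖p‖⁻¹ • p‖ ≤ 1 := by
  rcases eq_or_ne p 0 with rfl | hp
  · simp
  · exact (norm_smul_inv_norm hp).le

lemma inner_inv_norm_smul_self_right (p : E) : ⟪p, ‖p‖⁻¹ • p⟫ = ‖p‖ := by
  rcases eq_or_ne p 0 with rfl | hp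
  · simp
  · rw [real_inner_smul_right, real_inner_self_eq_norm_sq]
    field_simp

namespace StronglyConvexSet

variable {α : ℝ} {Ω : Set E}

lemma add_mem (hΩ : StronglyConvexSet α Ω) {u v : E} (hu : u ∈ Ω) (hv : v ∈ Ω) {θ : ℝ}
    (hθ : θ ∈ Set.Icc (0 : ℝ) 1) {w : E} (hw : ‖w‖ ≤ θ * (1 - θ) * (α / 2) * ‖u - v‖ ^ 2) :
    θ • u + (1 - θ) • v + w ∈ Ω :=
  hΩ u hu v hv θ hθ _ (by rwa [add_sub_cancel_left])

lemma mul_le_inner_sub_of_isMaxOn (hα : 0 ≤ α) (hΩ : StronglyConvexSet α Ω) {p x y : E}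
    (hx : x ∈ Ω) (hy : y ∈ Ω) (hmax : IsMaxOn (fun z => ⟪p, z⟫) Ω x) {θ : ℝ}
    (hθ₀ : 0 ≤ θ) (hθ₁ : θ < 1) :
    θ * (α * ‖p‖ / 2 * ‖x - y‖ ^ 2) ≤ ⟪p, x - y⟫ := by
  have h1θ : 0 < 1 - θ := sub_pos.2 hθ₁
  set r := θ * (1 - θ) * (α / 2) * ‖x - y‖ ^ 2
  have hr : 0 ≤ r := by positivity
  have hz : θ • x + (1 - θ) • y + r • ‖p‖⁻¹ • p ∈ Ω := by
    refine hΩ.add_mem hx hy ⟨hθ₀, hθ₁.le⟩ ?_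
    rw [norm_smul, Real.norm_of_nonneg hr]
    exact mul_le_of_le_one_right hr (norm_inv_norm_smul_le_one p)
  have hgap : ⟪p, x - (θ • x + (1 - θ) • y + r • ‖p‖⁻¹ • p)⟫
      = (1 - θ) * ⟪p, x - y⟫ - r * ‖p‖ := by
    have : x - (θ • x + (1 - θ) • y + r • ‖p‖⁻¹ • p) = (1 - θ) • (x - y) - r • ‖p‖⁻¹ • p := by
      module
    rw [this, inner_sub_right, real_inner_smul_right, real_inner_smul_right,
      inner_inv_norm_smul_self_right]
  have hgap_nonneg : 0 ≤ (1 - θ) * ⟪p, x - y⟫ - r * ‖p‖ := by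
    rw [← hgap, inner_sub_right, sub_nonneg]
    exact isMaxOn_iff.1 hmax _ hz
  refine le_of_mul_le_mul_left ?_ h1θ
  calc (1 - θ) * (θ * (α * ‖p‖ / 2 * ‖x - y‖ ^ 2)) = r * ‖p‖ := by ring
    _ ≤ (1 - θ) * ⟪p, x - y⟫ := by linarith

end StronglyConvexSet

end

theorem strongly_convex_set_linear_opt_quadratic_gap_general
    {E : Type*} [NormedAddCommGroup E] [InnerProductSpace ℝ E]
    {α : ℝ} (hα : 0 < α) {Ω : Set E} (hΩ : StronglyConvexSet α Ω)
    {p : E} {xp : E} (hxp : xp ∈ Ω)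
    (hopt : ∀ y ∈ Ω, ⟪p, y⟫ ≤ ⟪p, xp⟫) :
    ∀ y ∈ Ω, α * ‖p‖ / 2 * ‖xp - y‖ ^ 2 ≤ ⟪p, xp - y⟫ := by
  intro y hy
  have hlim : Tendsto (fun θ : ℝ => θ * (α * ‖p‖ / 2 * ‖xp - y‖ ^ 2)) (𝓝[<] 1)
      (𝓝 (α * ‖p‖ / 2 * ‖xp - y‖ ^ 2)) := by
    simpa using ((continuous_mul_const _).tendsto (1 : ℝ)).mono_left nhdsWithin_le_nhds
  refine le_of_tendsto hlim ?_
  filter_upwards [Ioo_mem_nhdsLT zero_lt_one] with θ hθ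
  exact hΩ.mul_le_inner_sub_of_isMaxOn hα.le hxp hy (isMaxOn_iff.2 hopt) hθ.1.le hθ.2

/-- If `x_p` maximizes the linear functional `⟨p, ·⟩` over an `α`-strongly convex set `Ω`,
then for every `y ∈ Ω`, `⟨p, x_p − y⟩ ≥ (α‖p‖/2)·‖x_p − y‖²`. -/
theorem strongly_convex_set_linear_opt_quadratic_gap
    {E : Type*} [NormedAddCommGroup E] [InnerProductSpace ℝ E]
    {α : ℝ} (hα : 0 < α) {Ω : Set E} (hΩ : StronglyConvexSet α Ω)
    {p : E} (hp : p ≠ 0) {xp : E} (hxp : xp ∈ Ω)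
    (hopt : ∀ y ∈ Ω, ⟪p, y⟫ ≤ ⟪p, xp⟫) :
    ∀ y ∈ Ω, α * ‖p‖ / 2 * ‖xp - y‖ ^ 2 ≤ ⟪p, xp - y⟫ :=
  strongly_convex_set_linear_opt_quadratic_gap_general hα hΩ hxp hopt
end

section
/- Let E be a real inner product space, let α > 0, and let Ω ⊆ E be an α-strongly convex set. Let u ∈ E with ‖u‖ = 1 and let x_u ∈ Ω satisfy ⟨u, x_u⟩ ≥ ⟨u, y⟩ for all y ∈ Ω. Then Ω is contained in the closed ball of radius 1/α centered at x_u − (1/α)u, i.e., ‖y − (x_u − (1/α)u)‖ ≤ 1/α for every y ∈ Ω. -/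
/-!
Strong convexity lets us push the point `θ xu + (1 - θ) y` of the segment a distance
`θ(1 - θ)(α/2)‖xu - y‖²` in the direction `u` without leaving `Ω`. Since `xu` maximizes `⟪u, ·⟫`
on `Ω`, this gives `⟪u, y - xu⟫ + θ (α/2)‖y - xu‖² ≤ 0` for `θ < 1`, hence also for `θ = 1`.
Expanding `‖(y - xu) + α⁻¹ u‖²` shows this inequality is exactly `y` lying in the ball.
-/

open RealInnerProductSpace

theorem add_nonpos_of_forall_mem_Ico_add_mul_nonpos {a c : ℝ}
    (h : ∀ θ ∈ Set.Ico (0 : ℝ) 1, a + θ * c ≤ 0) : a + c ≤ 0 := by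
  have hclosed : IsClosed {θ : ℝ | a + θ * c ≤ 0} := isClosed_le (by fun_prop) continuous_const
  have hIcc : Set.Icc (0 : ℝ) 1 ⊆ {θ : ℝ | a + θ * c ≤ 0} := by
    rw [← closure_Ico zero_ne_one]
    exact hclosed.closure_subset_iff.mpr h
  simpa using hIcc (Set.right_mem_Icc.mpr zero_le_one)

theorem norm_add_one_div_smul_le_of_inner_le {E : Type*} [NormedAddCommGroup E]
    [InnerProductSpace ℝ E] {α : ℝ} (hα : 0 < α) {u d : E} (hu : ‖u‖ = 1)
    (h : ⟪u, d⟫ ≤ -(α / 2) * ‖d‖ ^ 2) : ‖d + (1 / α) • u‖ ≤ 1 / α := by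
  have hr : 0 ≤ 1 / α := by positivity
  refine (pow_le_pow_iff_left₀ (norm_nonneg _) hr two_ne_zero).mp ?_
  rw [norm_add_sq_real, real_inner_smul_right, norm_smul, hu, Real.norm_of_nonneg hr,
    real_inner_comm]
  have hscaled : (1 / α) * ⟪u, d⟫ ≤ (1 / α) * (-(α / 2) * ‖d‖ ^ 2) :=
    mul_le_mul_of_nonneg_left h hr
  have hcancel : (1 / α) * (-(α / 2) * ‖d‖ ^ 2) = -‖d‖ ^ 2 / 2 := by field_simp
  nlinarith

namespace StronglyConvexSet

variable {E : Type*} [NormedAddCommGroup E] [InnerProductSpace ℝ E] {α : ℝ} {Ω : Set E}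

theorem smul_add_smul_add_smul_mem (hΩ : StronglyConvexSet α Ω) (hα : 0 ≤ α) {x y u : E}
    (hx : x ∈ Ω) (hy : y ∈ Ω) (hu : ‖u‖ = 1) {θ : ℝ} (hθ : θ ∈ Set.Icc (0 : ℝ) 1) :
    θ • x + (1 - θ) • y + (θ * (1 - θ) * (α / 2) * ‖x - y‖ ^ 2) • u ∈ Ω := by
  refine hΩ x hx y hy θ hθ _ ?_
  have hθ₁ : 0 ≤ 1 - θ := sub_nonneg.mpr hθ.2
  have hθ₀ := hθ.1
  rw [add_sub_cancel_left, norm_smul, hu, mul_one, Real.norm_of_nonneg (by positivity)]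

theorem inner_sub_le_of_forall_inner_le (hΩ : StronglyConvexSet α Ω) (hα : 0 ≤ α) {u x y : E}
    (hu : ‖u‖ = 1) (hx : x ∈ Ω) (hy : y ∈ Ω) (hmax : ∀ z ∈ Ω, ⟪u, z⟫ ≤ ⟪u, x⟫) :
    ⟪u, y - x⟫ ≤ -(α / 2) * ‖y - x‖ ^ 2 := by
  suffices ⟪u, y - x⟫ + (α / 2) * ‖y - x‖ ^ 2 ≤ 0 by linarith
  refine add_nonpos_of_forall_mem_Ico_add_mul_nonpos fun θ hθ => ?_
  have hz := hmax _ (hΩ.smul_add_smul_add_smul_mem hα hx hy hu (Set.Ico_subset_Icc_self hθ))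
  rw [inner_add_right, inner_add_right, real_inner_smul_right, real_inner_smul_right,
    real_inner_smul_right, real_inner_self_eq_norm_sq, hu, norm_sub_rev] at hz
  have hfactored : (1 - θ) * (⟪u, y - x⟫ + θ * ((α / 2) * ‖y - x‖ ^ 2)) ≤ 0 := by
    rw [inner_sub_right]
    linarith
  exact nonpos_of_mul_nonpos_right hfactored (sub_pos.mpr hθ.2)

end StronglyConvexSet

/-- If `x_u` maximizes the linear functional `⟨u, ·⟩` (with `‖u‖ = 1`) over an `α`-strongly
convex set `Ω`, then `Ω` is contained in the closed ball of radius `1/α` centered at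
`x_u − (1/α)·u`. -/
theorem strongly_convex_set_subset_ball
    {E : Type*} [NormedAddCommGroup E] [InnerProductSpace ℝ E]
    {α : ℝ} (hα : 0 < α) {Ω : Set E} (hΩ : StronglyConvexSet α Ω)
    {u : E} (hu : ‖u‖ = 1) {xu : E} (hxu : xu ∈ Ω)
    (hopt : ∀ y ∈ Ω, ⟪u, y⟫ ≤ ⟪u, xu⟫) :
    ∀ y ∈ Ω, ‖y - (xu - (1 / α) • u)‖ ≤ 1 / α := by
  intro y hy
  rw [sub_sub_eq_add_sub, add_sub_right_comm]
  exact norm_add_one_div_smul_le_of_inner_le hα hu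
    (hΩ.inner_sub_le_of_forall_inner_le hα.le hu hxu hy hopt)
end

section
/- Let E be a real inner product space, let α > 0, and let Ω ⊆ E be a nonempty compact α-strongly convex set. Let p, q ∈ E be nonzero vectors and let x_p, x_q ∈ Ω satisfy ⟨p, x_p⟩ ≥ ⟨p, y⟩ and ⟨q, x_q⟩ ≥ ⟨q, y⟩ for all y ∈ Ω. Then ‖x_p − x_q‖ ≤ 2‖p − q‖ / (α(‖p‖ + ‖q‖)). -/
/-!
Strong convexity lets one push a convex combination `θ x + (1 - θ) y` of points of `Ω` outward
along `p` by `θ(1−θ)(α/2)‖x−y‖²` without leaving `Ω`. Comparing with the maximality of `x` for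
`⟪p, ·⟫` and letting `θ → 1` gives `(α/2)‖p‖‖x−y‖² ≤ ⟪p, x − y⟫`. Adding this inequality for
`(p, x_p, x_q)` and `(q, x_q, x_p)` and applying Cauchy–Schwarz to `⟪p − q, x_p − x_q⟫` yields
`(α/2)(‖p‖ + ‖q‖)‖x_p − x_q‖² ≤ ‖p − q‖‖x_p − x_q‖`.
-/

open RealInnerProductSpace

open Filter Topology in
lemma le_of_forall_mem_Ico_mul_le {a b : ℝ} (h : ∀ θ ∈ Set.Ico (0 : ℝ) 1, θ * a ≤ b) :
    a ≤ b := by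
  have hlim : Tendsto (fun θ : ℝ ↦ θ * a) (𝓝[<] 1) (𝓝 a) :=
    ((continuous_mul_const a).tendsto' 1 a (one_mul a)).mono_left nhdsWithin_le_nhds
  exact le_of_tendsto hlim (eventually_of_mem (Ico_mem_nhdsLT zero_lt_one) h)

namespace StronglyConvexSet

variable {E : Type*} [NormedAddCommGroup E] [InnerProductSpace ℝ E] {α : ℝ} {Ω : Set E}

lemma add_smul_mem (hα : 0 ≤ α) (hΩ : StronglyConvexSet α Ω) {u v : E} (hu : u ∈ Ω)
    (hv : v ∈ Ω) {θ : ℝ} (hθ : θ ∈ Set.Icc (0 : ℝ) 1) {w : E} (hw : ‖w‖ ≤ 1) :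
    θ • u + (1 - θ) • v + (θ * (1 - θ) * (α / 2) * ‖u - v‖ ^ 2) • w ∈ Ω := by
  refine hΩ u hu v hv θ hθ _ ?_
  have hr : 0 ≤ θ * (1 - θ) * (α / 2) * ‖u - v‖ ^ 2 := by
    have := sub_nonneg.2 hθ.2
    have := hθ.1
    positivity
  rw [add_sub_cancel_left, norm_smul, Real.norm_of_nonneg hr]
  exact mul_le_of_le_one_right hr hw

lemma half_mul_norm_mul_sq_le_inner_sub (hα : 0 ≤ α) (hΩ : StronglyConvexSet α Ω)
    {p x y : E} (hx : x ∈ Ω) (hy : y ∈ Ω) (hmax : ∀ z ∈ Ω, ⟪p, z⟫ ≤ ⟪p, x⟫) :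
    α / 2 * ‖p‖ * ‖x - y‖ ^ 2 ≤ ⟪p, x - y⟫ := by
  rcases eq_or_ne p 0 with rfl | hp
  · simp
  refine le_of_forall_mem_Ico_mul_le fun θ ⟨hθ₀, hθ₁⟩ ↦ ?_
  set r := θ * (1 - θ) * (α / 2) * ‖x - y‖ ^ 2
  have hunit : ‖‖p‖⁻¹ • p‖ ≤ 1 := by
    rw [norm_smul, norm_inv, norm_norm, inv_mul_cancel₀ (norm_ne_zero_iff.2 hp)]
  have hz := hmax _ (hΩ.add_smul_mem hα hx hy ⟨hθ₀, hθ₁.le⟩ hunit)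
  have hinner : ⟪p, θ • x + (1 - θ) • y + r • ‖p‖⁻¹ • p⟫
      = θ * ⟪p, x⟫ + (1 - θ) * ⟪p, y⟫ + r * ‖p‖ := by
    have := norm_ne_zero_iff.2 hp
    simp only [inner_add_right, inner_smul_right, real_inner_self_eq_norm_sq]
    field_simp
  rw [hinner, ← sub_nonneg] at hz
  have hθ : 0 < 1 - θ := sub_pos.2 hθ₁
  refine le_of_mul_le_mul_left ?_ hθ
  rw [inner_sub_right]
  linear_combination hz

end StronglyConvexSet

theorem strongly_convex_set_oracle_lipschitz_general
    {E : Type*} [NormedAddCommGroup E] [InnerProductSpace ℝ E]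
    {α : ℝ} (hα : 0 < α) {Ω : Set E}
    (hΩ : StronglyConvexSet α Ω)
    {p q : E} (hp : p ≠ 0)
    {xp xq : E} (hxp : xp ∈ Ω) (hxq : xq ∈ Ω)
    (hoptp : ∀ y ∈ Ω, ⟪p, y⟫ ≤ ⟪p, xp⟫)
    (hoptq : ∀ y ∈ Ω, ⟪q, y⟫ ≤ ⟪q, xq⟫) :
    ‖xp - xq‖ ≤ 2 * ‖p - q‖ / (α * (‖p‖ + ‖q‖)) := by
  have hp' := hΩ.half_mul_norm_mul_sq_le_inner_sub hα.le hxp hxq hoptp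
  have hq' := hΩ.half_mul_norm_mul_sq_le_inner_sub hα.le hxq hxp hoptq
  rw [norm_sub_rev, ← neg_sub xp xq, inner_neg_right] at hq'
  have hmain : α / 2 * (‖p‖ + ‖q‖) * ‖xp - xq‖ * ‖xp - xq‖ ≤ ‖p - q‖ * ‖xp - xq‖ :=
    calc α / 2 * (‖p‖ + ‖q‖) * ‖xp - xq‖ * ‖xp - xq‖ ≤ ⟪p - q, xp - xq⟫ := by
          rw [inner_sub_left]; linear_combination hp' + hq'
      _ ≤ ‖p - q‖ * ‖xp - xq‖ := real_inner_le_norm _ _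
  have hden : 0 < α * (‖p‖ + ‖q‖) := by
    have := norm_pos_iff.2 hp
    positivity
  rw [le_div_iff₀ hden]
  rcases (norm_nonneg (xp - xq)).eq_or_lt with hzero | hpos
  · rw [← hzero, zero_mul]
    positivity
  · linear_combination 2 * le_of_mul_le_mul_right hmain hpos

/-- Lipschitz continuity of the linear optimization (Frank–Wolfe) oracle over a nonempty
compact `α`-strongly convex set: if `x_p` and `x_q` maximize `⟨p, ·⟩` and `⟨q, ·⟩` over `Ω`
respectively, then `‖x_p − x_q‖ ≤ 2‖p − q‖ / (α(‖p‖ + ‖q‖))`. -/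
theorem strongly_convex_set_oracle_lipschitz
    {E : Type*} [NormedAddCommGroup E] [InnerProductSpace ℝ E]
    {α : ℝ} (hα : 0 < α) {Ω : Set E} (hne : Ω.Nonempty) (hcomp : IsCompact Ω)
    (hΩ : StronglyConvexSet α Ω)
    {p q : E} (hp : p ≠ 0) (hq : q ≠ 0)
    {xp xq : E} (hxp : xp ∈ Ω) (hxq : xq ∈ Ω)
    (hoptp : ∀ y ∈ Ω, ⟪p, y⟫ ≤ ⟪p, xp⟫)
    (hoptq : ∀ y ∈ Ω, ⟪q, y⟫ ≤ ⟪q, xq⟫) :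
    ‖xp - xq‖ ≤ 2 * ‖p - q‖ / (α * (‖p‖ + ‖q‖)) :=
  strongly_convex_set_oracle_lipschitz_general hα hΩ hp hxp hxq hoptp hoptq
end

section
/- Let E be a real inner product space and let f : E → ℝ be convex, differentiable with gradient ∇f, and L-smooth (L ≥ 0). Let γ ∈ [0,1], let w, v, v' ∈ E, and set z = (1−γ)w + γv and w' = (1−γ)w + γv'. Then f(w') ≤ (1−γ)·f(w) + γ·( f(z) + ⟨∇f(z), v' − z⟩ ) + (Lγ²/2)·‖v' − v‖². -/
/-!
Smoothness at `z` bounds `f w'` by the linearisation of `f` at `z` plus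
`L / 2 * ‖w' - z‖ ^ 2`, and `w' - z = γ • (v' - v)`. Since also
`w' - z = (1 - γ) • (w - z) + γ • (v' - z)`, the linear term splits into a `(1 - γ)`-part,
which the gradient inequality of the convex function `f` bounds by `(1 - γ) * f w`, and the
`γ`-part of the claim.
-/

open RealInnerProductSpace

theorem ConvexOn.add_fderiv_sub_le {E : Type*} [NormedAddCommGroup E] [NormedSpace ℝ E]
    {s : Set E} {f : E → ℝ} {φ : E →L[ℝ] ℝ} {a b : E} (hf : ConvexOn ℝ s f) (ha : a ∈ s)
    (hb : b ∈ s) (hφ : HasFDerivAt f φ a) : f a + φ (b - a) ≤ f b := by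
  let c : ℝ →ᵃ[ℝ] E := AffineMap.lineMap a b
  have hc : HasDerivAt (f ∘ c) (φ (b - a)) 0 := by
    have hline : HasDerivAt c (b - a) 0 := by
      simpa [c] using AffineMap.hasDerivAt_lineMap (a := a) (b := b) (x := (0 : ℝ))
    simpa [c] using hφ.comp_hasDerivAt_of_eq 0 hline (by simp [c])
  have := (hf.comp_affineMap c).le_slope_of_hasDerivAt (by simpa [c]) (by simpa [c]) one_pos hc
  simp only [slope_def_field, Function.comp_apply, AffineMap.lineMap_apply_zero,
    AffineMap.lineMap_apply_one, sub_zero, div_one, c] at this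
  linarith

theorem smooth_convex_one_step_inequality_general
    {E : Type*} [NormedAddCommGroup E] [InnerProductSpace ℝ E]
    (f : E → ℝ) (f' : E → E) {L : ℝ}
    (hconv : ConvexOn ℝ Set.univ f)
    (hdiff : ∀ x : E, HasFDerivAt f (innerSL ℝ (f' x)) x)
    (hsmooth : ∀ x y : E, |f x - f y - ⟪f' y, x - y⟫| ≤ L / 2 * ‖x - y‖ ^ 2)
    {γ : ℝ} (hγ : γ ∈ Set.Icc (0 : ℝ) 1) (w v v' z w' : E)
    (hz : z = (1 - γ) • w + γ • v) (hw' : w' = (1 - γ) • w + γ • v') :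
    f w' ≤ (1 - γ) * f w + γ * (f z + ⟪f' z, v' - z⟫) + L * γ ^ 2 / 2 * ‖v' - v‖ ^ 2 := by
  have hsupport : f z + ⟪f' z, w - z⟫ ≤ f w :=
    hconv.add_fderiv_sub_le (Set.mem_univ z) (Set.mem_univ w) (hdiff z)
  have hupper : f w' ≤ f z + ⟪f' z, w' - z⟫ + L / 2 * ‖w' - z‖ ^ 2 := by
    linarith [(abs_le.mp (hsmooth w' z)).2]
  have hinner : ⟪f' z, w' - z⟫ = (1 - γ) * ⟪f' z, w - z⟫ + γ * ⟪f' z, v' - z⟫ := by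
    rw [show w' - z = (1 - γ) • (w - z) + γ • (v' - z) by rw [hw']; module, inner_add_right,
      real_inner_smul_right, real_inner_smul_right]
  have hnorm : ‖w' - z‖ ^ 2 = γ ^ 2 * ‖v' - v‖ ^ 2 := by
    rw [show w' - z = γ • (v' - v) by rw [hw', hz]; module, norm_smul, mul_pow, Real.norm_eq_abs,
      sq_abs]
  have hγ1 : 0 ≤ 1 - γ := sub_nonneg.2 hγ.2
  calc f w' ≤ f z + ⟪f' z, w' - z⟫ + L / 2 * ‖w' - z‖ ^ 2 := hupper
    _ = (1 - γ) * (f z + ⟪f' z, w - z⟫) + γ * (f z + ⟪f' z, v' - z⟫)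
        + L * γ ^ 2 / 2 * ‖v' - v‖ ^ 2 := by rw [hinner, hnorm]; ring
    _ ≤ _ := by gcongr

/-- One-step smoothness–convexity inequality: for a convex `L`-smooth `f` with gradient `f'`,
with `z = (1−γ)w + γv` and `w' = (1−γ)w + γv'`,
`f(w') ≤ (1−γ)f(w) + γ(f(z) + ⟨∇f(z), v' − z⟩) + (Lγ²/2)‖v' − v‖²`. -/
theorem smooth_convex_one_step_inequality
    {E : Type*} [NormedAddCommGroup E] [InnerProductSpace ℝ E]
    (f : E → ℝ) (f' : E → E) {L : ℝ} (hL : 0 ≤ L)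
    (hconv : ConvexOn ℝ Set.univ f)
    (hdiff : ∀ x : E, HasFDerivAt f (innerSL ℝ (f' x)) x)
    (hsmooth : ∀ x y : E, |f x - f y - ⟪f' y, x - y⟫| ≤ L / 2 * ‖x - y‖ ^ 2)
    {γ : ℝ} (hγ : γ ∈ Set.Icc (0 : ℝ) 1) (w v v' z w' : E)
    (hz : z = (1 - γ) • w + γ • v) (hw' : w' = (1 - γ) • w + γ • v') :
    f w' ≤ (1 - γ) * f w + γ * (f z + ⟪f' z, v' - z⟫) + L * γ ^ 2 / 2 * ‖v' - v‖ ^ 2 :=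
  smooth_convex_one_step_inequality_general f f' hconv hdiff hsmooth hγ w v v' z w' hz hw'
end

section
/- Let L ≥ 0 and let (a_t)_{t ≥ 0} and (b_t)_{t ≥ 1} be real sequences with b_t ≥ 0 for all t ≥ 1. Suppose that for every t ≥ 1, a_t ≤ (1 − 2/(t+1))·a_{t−1} + (2L/(t+1)²)·b_t. Then for every t ≥ 1, a_t ≤ (2L/(t(t+1)))·Σ_{i=1}^{t} b_i. -/
/-! The weighted sequence `u_t = t (t+1) a_t` satisfies `u_t ≤ u_{t-1} + 2 L b_t`, because
`t (t+1) (1 - 2/(t+1)) = (t-1) t` and `t (t+1) · 2L/(t+1)² ≤ 2L`. As `u_0 = 0`, telescoping gives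
`u_t ≤ 2L Σ_{i ≤ t} b_i`; dividing by `t (t+1)` is the claim. -/

open Finset

theorem le_add_sum_Icc_of_le_add {α : Type*} [AddCommMonoid α] [PartialOrder α]
    [IsOrderedAddMonoid α] (u d : ℕ → α) (h : ∀ t, 1 ≤ t → u t ≤ u (t - 1) + d t) :
    ∀ t, u t ≤ u 0 + ∑ i ∈ Icc 1 t, d i
  | 0 => by simp
  | t + 1 => by
    rw [sum_Icc_succ_top (by omega), ← add_assoc]
    exact (h (t + 1) (by omega)).trans (add_le_add_left (le_add_sum_Icc_of_le_add u d h t) _)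

theorem mul_add_one_mul_le_of_le_step {x L a a' b : ℝ} (hx : 0 ≤ x) (hLb : 0 ≤ L * b)
    (h : a ≤ (1 - 2 / (x + 1)) * a' + 2 * L / (x + 1) ^ 2 * b) :
    x * (x + 1) * a ≤ (x - 1) * x * a' + 2 * L * b := by
  have hx1 : 0 < x + 1 := by linarith
  have hcoef : x * (x + 1) * (1 - 2 / (x + 1)) = (x - 1) * x := by field_simp; ring
  have hdamp : x * (x + 1) * (2 * L / (x + 1) ^ 2) * b = x / (x + 1) * (2 * (L * b)) := by
    field_simp
  have hfrac : x / (x + 1) ≤ 1 := (div_le_one hx1).mpr (by linarith)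
  calc x * (x + 1) * a
      ≤ x * (x + 1) * ((1 - 2 / (x + 1)) * a' + 2 * L / (x + 1) ^ 2 * b) :=
        mul_le_mul_of_nonneg_left h (by positivity)
    _ = (x - 1) * x * a' + x / (x + 1) * (2 * (L * b)) := by rw [← hcoef, ← hdamp]; ring
    _ ≤ (x - 1) * x * a' + 2 * L * b := by
        linarith [mul_le_mul_of_nonneg_right hfrac (by positivity : 0 ≤ 2 * (L * b))]

/-- Telescoping estimate for Frank–Wolfe-type recursions with step sizes `γ_t = 2/(t+1)`:
if `a_t ≤ (1 − 2/(t+1))·a_{t−1} + (2L/(t+1)²)·b_t` for all `t ≥ 1` with `b_t ≥ 0`, then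
`a_t ≤ (2L/(t(t+1)))·Σ_{i=1}^{t} b_i` for all `t ≥ 1`. -/
theorem frank_wolfe_telescoping
    {L : ℝ} (hL : 0 ≤ L) (a b : ℕ → ℝ)
    (hb : ∀ t : ℕ, 1 ≤ t → 0 ≤ b t)
    (hrec : ∀ t : ℕ, 1 ≤ t →
      a t ≤ (1 - 2 / ((t : ℝ) + 1)) * a (t - 1) + 2 * L / ((t : ℝ) + 1) ^ 2 * b t) :
    ∀ t : ℕ, 1 ≤ t →
      a t ≤ 2 * L / ((t : ℝ) * ((t : ℝ) + 1)) * ∑ i ∈ Finset.Icc 1 t, b i := by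
  intro t ht
  set u : ℕ → ℝ := fun t ↦ t * (t + 1) * a t
  have hstep : ∀ t, 1 ≤ t → u t ≤ u (t - 1) + 2 * L * b t := by
    intro t ht
    simp only [u, Nat.cast_sub ht, Nat.cast_one, sub_add_cancel]
    exact mul_add_one_mul_le_of_le_step (Nat.cast_nonneg t) (mul_nonneg hL (hb t ht)) (hrec t ht)
  have htel : u t ≤ 2 * L * ∑ i ∈ Icc 1 t, b i := by
    simpa [u, mul_sum] using le_add_sum_Icc_of_le_add u (fun i ↦ 2 * L * b i) hstep t
  have hpos : 0 < (t : ℝ) * (t + 1) := by positivity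
  rw [div_mul_eq_mul_div, le_div_iff₀ hpos]
  linarith
end

section
/- Let E be a real inner product space, Ω ⊆ E a nonempty convex set, and f : E → ℝ convex, differentiable with gradient ∇f, and L-smooth (L ≥ 0). Define sequences by: w_0 = v_0 ∈ Ω; for t ≥ 1, γ_t = 2/(t+1), z_{t−1} = (1−γ_t)w_{t−1} + γ_t v_{t−1}, v_t ∈ Ω with ⟨∇f(z_{t−1}), v_t⟩ ≤ ⟨∇f(z_{t−1}), u⟩ for all u ∈ Ω, and w_t = (1−γ_t)w_{t−1} + γ_t v_t. Then for every w* ∈ Ω and every t ≥ 1, f(w_t) − f(w*) ≤ (2L/(t(t+1)))·Σ_{i=1}^{t} ‖v_i − v_{i−1}‖². -/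
/-!
The tangent lower bound of the convex `f` at `z_{t-1}`, taken at `w_{t-1}` and at `w*`, together
with the minimizing property of `v_t` and the smoothness upper bound for
`w_t - z_{t-1} = γ_t (v_t - v_{t-1})`, gives the one-step recursion
`f(w_t) - f(w*) ≤ (1 - γ_t)(f(w_{t-1}) - f(w*)) + (L/2) γ_t² ‖v_t - v_{t-1}‖²`.
Multiplied by `t(t+1)/2` it telescopes, because `t(t+1)/2 · (1 - γ_t) = (t-1)t/2` and
`t(t+1)/2 · γ_t² ≤ 2`.
-/

open RealInnerProductSpace

theorem ConvexOn.tangent_le_of_hasFDerivAt {E : Type*} [NormedAddCommGroup E] [NormedSpace ℝ E]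
    {f : E → ℝ} {φ : E →L[ℝ] ℝ} {x : E} (hf : ConvexOn ℝ Set.univ f) (hφ : HasFDerivAt f φ x)
    (y : E) : f x + φ (y - x) ≤ f y := by
  have hline : ConvexOn ℝ Set.univ (f ∘ AffineMap.lineMap (k := ℝ) x y) :=
    hf.comp_affineMap (AffineMap.lineMap (k := ℝ) x y)
  have hderiv : HasDerivAt (f ∘ AffineMap.lineMap (k := ℝ) x y) (φ (y - x)) 0 := by
    have hφ' : HasFDerivAt f φ (AffineMap.lineMap x y (0 : ℝ)) := by simpa using hφ
    exact hφ'.comp_hasDerivAt 0 AffineMap.hasDerivAt_lineMap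
  have := hline.le_slope_of_hasDerivAt (Set.mem_univ 0) (Set.mem_univ 1) zero_lt_one hderiv
  simp only [slope_def_field, Function.comp_apply, AffineMap.lineMap_apply_zero,
    AffineMap.lineMap_apply_one, sub_zero, div_one] at this
  linarith

theorem le_add_sum_Icc_of_le_add_s8 {a b : ℕ → ℝ} (h : ∀ s, a (s + 1) ≤ a s + b (s + 1)) (t : ℕ) :
    a t ≤ a 0 + ∑ i ∈ Finset.Icc 1 t, b i := by
  induction t with
  | zero => simp
  | succ t ih =>
    rw [Finset.sum_Icc_succ_top (by omega)]
    linarith [h t]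

theorem primalAveraging_step_sub_le {E : Type*} [NormedAddCommGroup E] [InnerProductSpace ℝ E]
    {f : E → ℝ} {g w₀ v₀ v u z w : E} {L γ : ℝ} (hf : ConvexOn ℝ Set.univ f)
    (hg : HasFDerivAt f (innerSL ℝ g) z) (hγ₀ : 0 ≤ γ) (hγ₁ : γ ≤ 1)
    (hz : z = (1 - γ) • w₀ + γ • v₀) (hw : w = (1 - γ) • w₀ + γ • v)
    (hsmooth : f w ≤ f z + ⟪g, w - z⟫ + L / 2 * ‖w - z‖ ^ 2) (horacle : ⟪g, v⟫ ≤ ⟪g, u⟫) :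
    f w - f u ≤ (1 - γ) * (f w₀ - f u) + L / 2 * γ ^ 2 * ‖v - v₀‖ ^ 2 := by
  have hdist : w - z = γ • (v - v₀) := by rw [hw, hz]; module
  have hsplit : w - z = (1 - γ) • (w₀ - z) + γ • (u - z) + γ • (v - u) := by
    rw [hw, hz]; module
  have hw₀ : f z + ⟪g, w₀ - z⟫ ≤ f w₀ := hf.tangent_le_of_hasFDerivAt hg w₀
  have hu : f z + ⟪g, u - z⟫ ≤ f u := hf.tangent_le_of_hasFDerivAt hg u
  have hlin : ⟪g, w - z⟫ ≤ (1 - γ) * ⟪g, w₀ - z⟫ + γ * ⟪g, u - z⟫ := by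
    rw [hsplit, inner_add_right, inner_add_right, real_inner_smul_right, real_inner_smul_right,
      real_inner_smul_right]
    have : γ * ⟪g, v - u⟫ ≤ 0 :=
      mul_nonpos_of_nonneg_of_nonpos hγ₀ (by rw [inner_sub_right]; linarith)
    linarith
  have hquad : ‖w - z‖ ^ 2 = γ ^ 2 * ‖v - v₀‖ ^ 2 := by
    rw [hdist, norm_smul, Real.norm_of_nonneg hγ₀]; ring
  rw [hquad] at hsmooth
  nlinarith [mul_le_mul_of_nonneg_left hw₀ (sub_nonneg.2 hγ₁), mul_le_mul_of_nonneg_left hu hγ₀]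

theorem potential_le_of_step {s L d a a' : ℝ} (hs : 0 ≤ s) (hL : 0 ≤ L) (hd : 0 ≤ d)
    (h : a' ≤ (1 - 2 / (s + 2)) * a + L / 2 * (2 / (s + 2)) ^ 2 * d) :
    (s + 1) * (s + 2) / 2 * a' ≤ s * (s + 1) / 2 * a + L * d := by
  have hpos : 0 < s + 2 := by linarith
  have hscaled := mul_le_mul_of_nonneg_left h (by positivity : 0 ≤ (s + 1) * (s + 2) / 2)
  have hid : (s + 1) * (s + 2) / 2 * ((1 - 2 / (s + 2)) * a + L / 2 * (2 / (s + 2)) ^ 2 * d)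
      = s * (s + 1) / 2 * a + (s + 1) / (s + 2) * (L * d) := by
    field_simp; ring
  have hcoef : (s + 1) / (s + 2) * (L * d) ≤ L * d :=
    mul_le_of_le_one_left (by positivity) ((div_le_one hpos).2 (by linarith))
  linarith

theorem primal_averaging_optionB_rate_general
    {E : Type*} [NormedAddCommGroup E] [InnerProductSpace ℝ E]
    {Ω : Set E}
    (f : E → ℝ) (f' : E → E) {L : ℝ} (hL : 0 ≤ L)
    (hconv : ConvexOn ℝ Set.univ f)
    (hdiff : ∀ x : E, HasFDerivAt f (innerSL ℝ (f' x)) x)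
    (hsmooth : ∀ x y : E, |f x - f y - ⟪f' y, x - y⟫| ≤ L / 2 * ‖x - y‖ ^ 2)
    (w v z : ℕ → E)
    (hz : ∀ t : ℕ, 1 ≤ t →
      z (t - 1) = (1 - 2 / ((t : ℝ) + 1)) • w (t - 1) + (2 / ((t : ℝ) + 1)) • v (t - 1))
    (horacle : ∀ t : ℕ, 1 ≤ t → ∀ u ∈ Ω,
      ⟪f' (z (t - 1)), v t⟫ ≤ ⟪f' (z (t - 1)), u⟫)
    (hw : ∀ t : ℕ, 1 ≤ t →
      w t = (1 - 2 / ((t : ℝ) + 1)) • w (t - 1) + (2 / ((t : ℝ) + 1)) • v t) :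
    ∀ wstar ∈ Ω, ∀ t : ℕ, 1 ≤ t →
      f (w t) - f wstar ≤
        2 * L / ((t : ℝ) * ((t : ℝ) + 1)) * ∑ i ∈ Finset.Icc 1 t, ‖v i - v (i - 1)‖ ^ 2 := by
  intro wstar hwstar t ht
  set Φ : ℕ → ℝ := fun s ↦ (s : ℝ) * ((s : ℝ) + 1) / 2 * (f (w s) - f wstar) with hΦ
  have hΦ_step (s : ℕ) : Φ (s + 1) ≤ Φ s + L * ‖v (s + 1) - v s‖ ^ 2 := by
    have hγ : 2 / (((s + 1 : ℕ) : ℝ) + 1) = 2 / ((s : ℝ) + 2) := by push_cast; ring_nf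
    have hz' := hz (s + 1) (by omega)
    have hw' := hw (s + 1) (by omega)
    simp only [Nat.add_sub_cancel, hγ] at hz' hw'
    have hdesc := primalAveraging_step_sub_le (L := L) hconv (hdiff _) (by positivity)
      ((div_le_one (by positivity)).2 (by linarith [s.cast_nonneg (α := ℝ)])) hz' hw'
      (by linarith [(abs_le.1 (hsmooth (w (s + 1)) (z s))).2])
      (horacle (s + 1) (by omega) wstar hwstar)
    have := potential_le_of_step s.cast_nonneg hL (by positivity) hdesc
    simp only [hΦ]; push_cast; linarith
  have hΦ_le := le_add_sum_Icc_of_le_add_s8 (b := fun i ↦ L * ‖v i - v (i - 1)‖ ^ 2)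
    (by simpa using hΦ_step) t
  have ht' : (0 : ℝ) < t := by exact_mod_cast ht
  simp only [hΦ, CharP.cast_eq_zero, zero_mul, zero_div, zero_add, ← Finset.mul_sum] at hΦ_le
  rw [mul_comm, ← le_div_iff₀ (by positivity)] at hΦ_le
  exact hΦ_le.trans_eq (by rw [div_div_eq_mul_div]; ring)

/-- Convergence bound for Primal Averaging with option (B) (`p_t = ∇f(z_{t−1})`) and step
sizes `γ_t = 2/(t+1)`: for every `w* ∈ Ω` and `t ≥ 1`,
`f(w_t) − f(w*) ≤ (2L/(t(t+1)))·Σ_{i=1}^{t} ‖v_i − v_{i−1}‖²`. -/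
theorem primal_averaging_optionB_rate
    {E : Type*} [NormedAddCommGroup E] [InnerProductSpace ℝ E]
    {Ω : Set E} (hne : Ω.Nonempty) (hΩ : Convex ℝ Ω)
    (f : E → ℝ) (f' : E → E) {L : ℝ} (hL : 0 ≤ L)
    (hconv : ConvexOn ℝ Set.univ f)
    (hdiff : ∀ x : E, HasFDerivAt f (innerSL ℝ (f' x)) x)
    (hsmooth : ∀ x y : E, |f x - f y - ⟪f' y, x - y⟫| ≤ L / 2 * ‖x - y‖ ^ 2)
    (w v z : ℕ → E)
    (hw0 : w 0 = v 0) (hv0 : v 0 ∈ Ω)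
    (hz : ∀ t : ℕ, 1 ≤ t →
      z (t - 1) = (1 - 2 / ((t : ℝ) + 1)) • w (t - 1) + (2 / ((t : ℝ) + 1)) • v (t - 1))
    (hvmem : ∀ t : ℕ, 1 ≤ t → v t ∈ Ω)
    (horacle : ∀ t : ℕ, 1 ≤ t → ∀ u ∈ Ω,
      ⟪f' (z (t - 1)), v t⟫ ≤ ⟪f' (z (t - 1)), u⟫)
    (hw : ∀ t : ℕ, 1 ≤ t →
      w t = (1 - 2 / ((t : ℝ) + 1)) • w (t - 1) + (2 / ((t : ℝ) + 1)) • v t) :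
    ∀ wstar ∈ Ω, ∀ t : ℕ, 1 ≤ t →
      f (w t) - f wstar ≤
        2 * L / ((t : ℝ) * ((t : ℝ) + 1)) * ∑ i ∈ Finset.Icc 1 t, ‖v i - v (i - 1)‖ ^ 2 :=
  primal_averaging_optionB_rate_general f f' hL hconv hdiff hsmooth w v z hz horacle hw
end

section
/- Let E be a real inner product space, Ω ⊆ E a nonempty convex set, and f : E → ℝ convex, differentiable with gradient ∇f, and L-smooth (L ≥ 0). Define sequences by: w_0 = v_0 ∈ Ω; for t ≥ 1, γ_t = 2/(t+1), z_{t−1} = (1−γ_t)w_{t−1} + γ_t v_{t−1}, p_t = (2/(t(t+1)))·Σ_{i=1}^{t} i·∇f(z_{i−1}), v_t ∈ Ω with ⟨p_t, v_t⟩ ≤ ⟨p_t, u⟩ for all u ∈ Ω, and w_t = (1−γ_t)w_{t−1} + γ_t v_t. Then for every w* ∈ Ω and every t ≥ 1, f(w_t) − f(w*) ≤ (2L/(t(t+1)))·Σ_{i=1}^{t} ‖v_i − v_{i−1}‖². -/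
/-!
Write `Θ_t = t(t+1)/2` and `φ_t(u) = Σ_{i=1}^t i (f(z_{i-1}) + ⟪∇f(z_{i-1}), u - z_{i-1}⟫)`.
Each `φ_t` is affine with slope `Θ_t p_t`, so the oracle makes `v_t` a minimizer of `φ_t` on `Ω`,
and by the gradient inequality `φ_t ≤ Θ_t f`. Smoothness at `z_t`, applied with `γ = 2/(t+2)` to
`w_{t+1} - z_t = γ (v_{t+1} - v_t) = (1 - γ)(w_t - z_t) + γ (v_{t+1} - z_t)` and combined with
`Θ_{t+1}(1 - γ) = Θ_t`, `Θ_{t+1} γ = t + 1`, `Θ_{t+1} γ² ≤ 2`, gives by induction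
`Θ_t f(w_t) ≤ φ_t(v_t) + L Σ_{i ≤ t} ‖v_i - v_{i-1}‖²`; finally `φ_t(v_t) ≤ φ_t(w*) ≤ Θ_t f(w*)`.
The gradient inequality itself comes from convexity and the lower half of smoothness, by letting
the step of a convex combination tend to `0`.
-/

open RealInnerProductSpace Filter Topology

section

variable {E : Type*} [NormedAddCommGroup E] [InnerProductSpace ℝ E]

theorem ConvexOn.add_inner_le_of_add_inner_sub_sq_le {f : E → ℝ} (hf : ConvexOn ℝ Set.univ f)
    {g y : E} {C : ℝ} (hlower : ∀ x, f y + ⟪g, x - y⟫ - C * ‖x - y‖ ^ 2 ≤ f x) (x : E) :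
    f y + ⟪g, x - y⟫ ≤ f x := by
  have hbound : ∀ᶠ s in 𝓝[>] (0 : ℝ), ⟪g, x - y⟫ ≤ f x - f y + s * (C * ‖x - y‖ ^ 2) := by
    filter_upwards [Ioc_mem_nhdsGT zero_lt_one] with s ⟨hs0, hs1⟩
    have hconv := hf.2 (Set.mem_univ x) (Set.mem_univ y) hs0.le (sub_nonneg.2 hs1) (by ring)
    have hl := hlower (s • x + (1 - s) • y)
    have hseg : s • x + (1 - s) • y - y = s • (x - y) := by module
    rw [hseg, real_inner_smul_right, norm_smul, Real.norm_of_nonneg hs0.le] at hl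
    simp only [smul_eq_mul] at hconv
    nlinarith
  have hlim : Tendsto (fun s : ℝ => f x - f y + s * (C * ‖x - y‖ ^ 2)) (𝓝[>] 0)
      (𝓝 (f x - f y)) := by
    simpa using tendsto_nhdsWithin_of_tendsto_nhds
      (((continuous_mul_const (C * ‖x - y‖ ^ 2)).tendsto 0).const_add (f x - f y))
  linarith [ge_of_tendsto hlim hbound]

theorem sum_Icc_one_natCast (t : ℕ) :
    ∑ i ∈ Finset.Icc 1 t, (i : ℝ) = t * (t + 1) / 2 := by
  induction t with
  | zero => simp
  | succ n ih =>
    rw [Finset.sum_Icc_succ_top (by omega), ih]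
    push_cast
    ring

def weightedLowerModel (f : E → ℝ) (f' : E → E) (z : ℕ → E) (t : ℕ) (u : E) : ℝ :=
  ∑ i ∈ Finset.Icc 1 t, (i : ℝ) * (f (z (i - 1)) + ⟪f' (z (i - 1)), u - z (i - 1)⟫)

variable {f : E → ℝ} {f' : E → E}

theorem le_linearization_convex_combination_add_sq {L : ℝ}
    (hupper : ∀ x y, f x ≤ f y + ⟪f' y, x - y⟫ + L / 2 * ‖x - y‖ ^ 2)
    {γ : ℝ} {w v v' z : E} (hz : z = (1 - γ) • w + γ • v) :
    f ((1 - γ) • w + γ • v') ≤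
      (1 - γ) * (f z + ⟪f' z, w - z⟫) + γ * (f z + ⟪f' z, v' - z⟫) +
        L / 2 * γ ^ 2 * ‖v' - v‖ ^ 2 := by
  have hstep : (1 - γ) • w + γ • v' - z = (1 - γ) • (w - z) + γ • (v' - z) := by
    rw [hz]; module
  have hstep' : (1 - γ) • w + γ • v' - z = γ • (v' - v) := by
    rw [hz]; module
  have h := hupper ((1 - γ) • w + γ • v') z
  rw [hstep, inner_add_right, real_inner_smul_right, real_inner_smul_right, ← hstep,
    hstep', norm_smul, mul_pow, Real.norm_eq_abs, sq_abs] at h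
  linarith

theorem weighted_averaging_step_le {L : ℝ} (hL : 0 ≤ L)
    (hupper : ∀ x y, f x ≤ f y + ⟪f' y, x - y⟫ + L / 2 * ‖x - y‖ ^ 2)
    (hgrad : ∀ x y, f y + ⟪f' y, x - y⟫ ≤ f x)
    {s : ℝ} (hs : 0 ≤ s) {w v v' z : E}
    (hz : z = (1 - 2 / (s + 1 + 1)) • w + (2 / (s + 1 + 1)) • v) :
    (s + 1) * (s + 1 + 1) / 2 * f ((1 - 2 / (s + 1 + 1)) • w + (2 / (s + 1 + 1)) • v') ≤
      s * (s + 1) / 2 * f w + (s + 1) * (f z + ⟪f' z, v' - z⟫) + L * ‖v' - v‖ ^ 2 := by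
  set γ := 2 / (s + 1 + 1) with hγ
  have hγs : γ * (s + 2) = 2 := by rw [hγ]; field_simp; ring
  have hbound := mul_le_mul_of_nonneg_left
    (le_linearization_convex_combination_add_sq hupper (v' := v') hz)
    (by positivity : 0 ≤ (s + 1) * (s + 1 + 1) / 2)
  have hgrad_w := mul_le_mul_of_nonneg_left (hgrad w z) (by positivity : 0 ≤ s * (s + 1) / 2)
  have hΘγ' : (s + 1) * (s + 1 + 1) / 2 * (1 - γ) = s * (s + 1) / 2 := by
    linear_combination (-(s + 1) / 2) * hγs
  have hΘγ : (s + 1) * (s + 1 + 1) / 2 * γ = s + 1 := by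
    linear_combination ((s + 1) / 2) * hγs
  have hΘγ2 : (s + 1) * (s + 1 + 1) / 2 * γ ^ 2 ≤ 2 := by nlinarith
  have hsq := mul_le_mul_of_nonneg_left hΘγ2 (by positivity : 0 ≤ L / 2 * ‖v' - v‖ ^ 2)
  have hsplit : (s + 1) * (s + 1 + 1) / 2 *
      ((1 - γ) * (f z + ⟪f' z, w - z⟫) + γ * (f z + ⟪f' z, v' - z⟫) + L / 2 * γ ^ 2 * ‖v' - v‖ ^ 2)
      = s * (s + 1) / 2 * (f z + ⟪f' z, w - z⟫) + (s + 1) * (f z + ⟪f' z, v' - z⟫) +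
        L / 2 * ‖v' - v‖ ^ 2 * ((s + 1) * (s + 1 + 1) / 2 * γ ^ 2) := by
    linear_combination (f z + ⟪f' z, w - z⟫) * hΘγ' + (f z + ⟪f' z, v' - z⟫) * hΘγ
  linarith

variable {z : ℕ → E}

@[simp]
theorem weightedLowerModel_zero (u : E) : weightedLowerModel f f' z 0 u = 0 := by
  simp [weightedLowerModel]

theorem weightedLowerModel_succ (t : ℕ) (u : E) :
    weightedLowerModel f f' z (t + 1) u =
      weightedLowerModel f f' z t u + (t + 1) * (f (z t) + ⟪f' (z t), u - z t⟫) := by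
  rw [weightedLowerModel, Finset.sum_Icc_succ_top (by omega), Nat.add_sub_cancel]
  push_cast
  rfl

theorem weightedLowerModel_sub (t : ℕ) (u u' : E) :
    weightedLowerModel f f' z t u - weightedLowerModel f f' z t u' =
      ⟪∑ i ∈ Finset.Icc 1 t, (i : ℝ) • f' (z (i - 1)), u - u'⟫ := by
  rw [weightedLowerModel, weightedLowerModel, ← Finset.sum_sub_distrib, sum_inner]
  refine Finset.sum_congr rfl fun i _ => ?_
  rw [real_inner_smul_left, inner_sub_right, inner_sub_right, inner_sub_right]
  ring

theorem weightedLowerModel_le_of_inner_le {t : ℕ} (ht : 1 ≤ t) {p v u : E}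
    (hp : p = (2 / ((t : ℝ) * ((t : ℝ) + 1))) • ∑ i ∈ Finset.Icc 1 t, (i : ℝ) • f' (z (i - 1)))
    (hpv : ⟪p, v⟫ ≤ ⟪p, u⟫) :
    weightedLowerModel f f' z t v ≤ weightedLowerModel f f' z t u := by
  have hc : 0 < 2 / ((t : ℝ) * ((t : ℝ) + 1)) := by
    have : (0 : ℝ) < t := by exact_mod_cast ht
    positivity
  have hdiff := weightedLowerModel_sub (f := f) (f' := f') (z := z) t v u
  rw [hp, real_inner_smul_left, real_inner_smul_left, mul_le_mul_iff_right₀ hc] at hpv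
  rw [inner_sub_right] at hdiff
  linarith

theorem weightedLowerModel_le (hgrad : ∀ x y, f y + ⟪f' y, x - y⟫ ≤ f x) (t : ℕ) (u : E) :
    weightedLowerModel f f' z t u ≤ t * (t + 1) / 2 * f u := by
  calc weightedLowerModel f f' z t u ≤ ∑ i ∈ Finset.Icc 1 t, (i : ℝ) * f u :=
        Finset.sum_le_sum fun i _ => mul_le_mul_of_nonneg_left (hgrad u _) i.cast_nonneg
    _ = t * (t + 1) / 2 * f u := by rw [← Finset.sum_mul, sum_Icc_one_natCast]

theorem weighted_value_le_weightedLowerModel_add {L : ℝ} (hL : 0 ≤ L)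
    (hupper : ∀ x y, f x ≤ f y + ⟪f' y, x - y⟫ + L / 2 * ‖x - y‖ ^ 2)
    (hgrad : ∀ x y, f y + ⟪f' y, x - y⟫ ≤ f x) {w v : ℕ → E}
    (hz : ∀ t : ℕ, 1 ≤ t →
      z (t - 1) = (1 - 2 / ((t : ℝ) + 1)) • w (t - 1) + (2 / ((t : ℝ) + 1)) • v (t - 1))
    (hw : ∀ t : ℕ, 1 ≤ t →
      w t = (1 - 2 / ((t : ℝ) + 1)) • w (t - 1) + (2 / ((t : ℝ) + 1)) • v t)
    (hmin : ∀ t : ℕ, 1 ≤ t →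
      weightedLowerModel f f' z t (v t) ≤ weightedLowerModel f f' z t (v (t + 1)))
    (t : ℕ) :
    t * (t + 1) / 2 * f (w t) ≤
      weightedLowerModel f f' z t (v t) + L * ∑ i ∈ Finset.Icc 1 t, ‖v i - v (i - 1)‖ ^ 2 := by
  induction t with
  | zero => simp
  | succ n ih =>
    have hzn := hz (n + 1) (by omega)
    have hwn := hw (n + 1) (by omega)
    simp only [Nat.add_sub_cancel, Nat.cast_add, Nat.cast_one] at hzn hwn
    have hstep := weighted_averaging_step_le hL hupper hgrad n.cast_nonneg hzn (v' := v (n + 1))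
    rw [← hwn] at hstep
    have hmono : weightedLowerModel f f' z n (v n) ≤ weightedLowerModel f f' z n (v (n + 1)) := by
      rcases n.eq_zero_or_pos with rfl | hn
      · simp
      · exact hmin n hn
    rw [weightedLowerModel_succ, Finset.sum_Icc_succ_top (by omega), Nat.add_sub_cancel]
    push_cast
    linarith

end

theorem primal_averaging_optionA_rate_general
    {E : Type*} [NormedAddCommGroup E] [InnerProductSpace ℝ E]
    {Ω : Set E}
    (f : E → ℝ) (f' : E → E) {L : ℝ} (hL : 0 ≤ L)
    (hconv : ConvexOn ℝ Set.univ f)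
    (hsmooth : ∀ x y : E, |f x - f y - ⟪f' y, x - y⟫| ≤ L / 2 * ‖x - y‖ ^ 2)
    (w v z p : ℕ → E)
    (hz : ∀ t : ℕ, 1 ≤ t →
      z (t - 1) = (1 - 2 / ((t : ℝ) + 1)) • w (t - 1) + (2 / ((t : ℝ) + 1)) • v (t - 1))
    (hp : ∀ t : ℕ, 1 ≤ t →
      p t = (2 / ((t : ℝ) * ((t : ℝ) + 1))) • ∑ i ∈ Finset.Icc 1 t, (i : ℝ) • f' (z (i - 1)))
    (hvmem : ∀ t : ℕ, 1 ≤ t → v t ∈ Ω)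
    (horacle : ∀ t : ℕ, 1 ≤ t → ∀ u ∈ Ω, ⟪p t, v t⟫ ≤ ⟪p t, u⟫)
    (hw : ∀ t : ℕ, 1 ≤ t →
      w t = (1 - 2 / ((t : ℝ) + 1)) • w (t - 1) + (2 / ((t : ℝ) + 1)) • v t) :
    ∀ wstar ∈ Ω, ∀ t : ℕ, 1 ≤ t →
      f (w t) - f wstar ≤
        2 * L / ((t : ℝ) * ((t : ℝ) + 1)) * ∑ i ∈ Finset.Icc 1 t, ‖v i - v (i - 1)‖ ^ 2 := by
  intro wstar hwstar t ht
  have hupper : ∀ x y, f x ≤ f y + ⟪f' y, x - y⟫ + L / 2 * ‖x - y‖ ^ 2 := fun x y => by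
    linarith [le_of_abs_le (hsmooth x y)]
  have hgrad : ∀ x y, f y + ⟪f' y, x - y⟫ ≤ f x := fun x y =>
    hconv.add_inner_le_of_add_inner_sub_sq_le (C := L / 2)
      (fun x => by linarith [neg_le_of_abs_le (hsmooth x y)]) x
  have hvalue := weighted_value_le_weightedLowerModel_add hL hupper hgrad hz hw
    (fun n hn => weightedLowerModel_le_of_inner_le hn (hp n hn)
      (horacle n hn _ (hvmem (n + 1) (by omega)))) t
  have hopt := weightedLowerModel_le_of_inner_le (f := f) ht (hp t ht) (horacle t ht wstar hwstar)
  have hlower := weightedLowerModel_le hgrad (z := z) t wstar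
  have ht' : (0 : ℝ) < t := by exact_mod_cast ht
  rw [div_mul_eq_mul_div, le_div_iff₀ (by positivity)]
  linarith

/-- Convergence bound for Primal Averaging with option (A): the oracle direction
`p_t = (2/(t(t+1)))·Σ_{i=1}^{t} i·∇f(z_{i−1})` is the weighted average of past gradients
(weights `θ_i = i`). For every `w* ∈ Ω` and `t ≥ 1`,
`f(w_t) − f(w*) ≤ (2L/(t(t+1)))·Σ_{i=1}^{t} ‖v_i − v_{i−1}‖²`. -/
theorem primal_averaging_optionA_rate
    {E : Type*} [NormedAddCommGroup E] [InnerProductSpace ℝ E]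
    {Ω : Set E} (hne : Ω.Nonempty) (hΩ : Convex ℝ Ω)
    (f : E → ℝ) (f' : E → E) {L : ℝ} (hL : 0 ≤ L)
    (hconv : ConvexOn ℝ Set.univ f)
    (hdiff : ∀ x : E, HasFDerivAt f (innerSL ℝ (f' x)) x)
    (hsmooth : ∀ x y : E, |f x - f y - ⟪f' y, x - y⟫| ≤ L / 2 * ‖x - y‖ ^ 2)
    (w v z p : ℕ → E)
    (hw0 : w 0 = v 0) (hv0 : v 0 ∈ Ω)
    (hz : ∀ t : ℕ, 1 ≤ t →
      z (t - 1) = (1 - 2 / ((t : ℝ) + 1)) • w (t - 1) + (2 / ((t : ℝ) + 1)) • v (t - 1))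
    (hp : ∀ t : ℕ, 1 ≤ t →
      p t = (2 / ((t : ℝ) * ((t : ℝ) + 1))) • ∑ i ∈ Finset.Icc 1 t, (i : ℝ) • f' (z (i - 1)))
    (hvmem : ∀ t : ℕ, 1 ≤ t → v t ∈ Ω)
    (horacle : ∀ t : ℕ, 1 ≤ t → ∀ u ∈ Ω, ⟪p t, v t⟫ ≤ ⟪p t, u⟫)
    (hw : ∀ t : ℕ, 1 ≤ t →
      w t = (1 - 2 / ((t : ℝ) + 1)) • w (t - 1) + (2 / ((t : ℝ) + 1)) • v t) :
    ∀ wstar ∈ Ω, ∀ t : ℕ, 1 ≤ t →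
      f (w t) - f wstar ≤
        2 * L / ((t : ℝ) * ((t : ℝ) + 1)) * ∑ i ∈ Finset.Icc 1 t, ‖v i - v (i - 1)‖ ^ 2 :=
  primal_averaging_optionA_rate_general f f' hL hconv hsmooth w v z p hz hp hvmem horacle hw
end

section
/- Let E be a real inner product space, α > 0, and let Ω ⊆ E be a nonempty compact α-strongly convex set of diameter at most D (i.e., ‖u − v‖ ≤ D for all u, v ∈ Ω). Let f : E → ℝ be convex, differentiable with gradient ∇f, L-smooth (L ≥ 0), and suppose ‖∇f(w)‖ ≤ G for all w ∈ Ω. Define the Primal Averaging iterates with option (A): w_0 = v_0 ∈ Ω; for t ≥ 1, γ_t = 2/(t+1), z_{t−1} = (1−γ_t)w_{t−1} + γ_t v_{t−1}, p_t = (2/(t(t+1)))·Σ_{i=1}^{t} i·∇f(z_{i−1}), v_t ∈ Ω with ⟨p_t, v_t⟩ ≤ ⟨p_t, u⟩ for all u ∈ Ω, and w_t = (1−γ_t)w_{t−1} + γ_t v_t. If there is g > 0 with ‖p_t‖ ≥ g for all t ≥ 1, then for every w* ∈ Ω and every t ≥ 1, f(w_t) − f(w*) ≤ (2L/(t(t+1)))·(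 D² + 16G²/(α²g²) ). -/
open RealInnerProductSpace

/-!
With `A_t = t(t+1)/2`, the weighted linearization
`ℓ_t(u) = ∑_{i ≤ t} i (f(z_{i-1}) + ⟪∇f(z_{i-1}), u - z_{i-1}⟫)` is an affine minorant of
`A_t f` with slope `A_t p_t`, so `v_t` minimizes it over `Ω`. Since
`w_{t+1} - z_t = γ_t (v_{t+1} - v_t)` with `γ_t = 2/(t+2)`, smoothness and convexity show that
the potential `A_t f(w_t) - ℓ_t(v_t)` grows by at most `L ‖v_{t+1} - v_t‖²` per step, and it
dominates `A_t (f(w_t) - f(w*))`. Over an `α`-strongly convex set the linear minimizer is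
Lipschitz in the direction: minimizers for `p, q` with `‖p‖, ‖q‖ ≥ g` satisfy
`α g ‖v - v'‖ ≤ ‖p - q‖`. As `p_{t+1} - p_t = γ_t (∇f(z_t) - p_t)`, this gives
`‖v_{t+1} - v_t‖ ≤ 4G / (α g (t+2))` for `t ≥ 1`, so the increments are summable; the first
one is bounded by the diameter.
-/

section General

open Set Filter Topology

variable {E : Type*} [NormedAddCommGroup E] [InnerProductSpace ℝ E]

theorem ConvexOn.add_inner_sub_le {f : E → ℝ} {f' : E → E} (hf : ConvexOn ℝ univ f) {x : E}
    (hx : HasFDerivAt f (innerSL ℝ (f' x)) x) (y : E) :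
    f x + ⟪f' x, y - x⟫ ≤ f y := by
  have hline : ConvexOn ℝ univ (f ∘ (AffineMap.lineMap x y : ℝ → E)) := hf.comp_affineMap _
  have hderiv : HasDerivAt (f ∘ (AffineMap.lineMap x y : ℝ → E)) ⟪f' x, y - x⟫ 0 := by
    have hx' : HasFDerivAt f (innerSL ℝ (f' x)) (AffineMap.lineMap x y (0 : ℝ)) := by
      simpa using hx
    simpa using hx'.comp_hasDerivAt (0 : ℝ) AffineMap.hasDerivAt_lineMap
  have := hline.le_slope_of_hasDerivAt (mem_univ 0) (mem_univ 1) zero_lt_one hderiv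
  simp only [slope_def_field, Function.comp_apply, AffineMap.lineMap_apply_one,
    AffineMap.lineMap_apply_zero, sub_zero, div_one] at this
  linarith

variable {α : ℝ} {Ω : Set E}

theorem StronglyConvexSet.convex (hα : 0 ≤ α) (hΩ : StronglyConvexSet α Ω) : Convex ℝ Ω := by
  intro u hu v hv a b ha hb hab
  obtain rfl : b = 1 - a := by linarith
  exact hΩ u hu v hv a ⟨ha, by linarith⟩ _ (by rw [sub_self, norm_zero]; positivity)

theorem StronglyConvexSet.inner_sub_le_of_isMinOn (hα : 0 ≤ α) (hΩ : StronglyConvexSet α Ω)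
    {p v u : E} (hv : v ∈ Ω) (hu : u ∈ Ω) (hmin : IsMinOn (fun x ↦ ⟪p, x⟫) Ω v) :
    ⟪p, v - u⟫ ≤ -(α / 2 * ‖p‖ * ‖v - u‖ ^ 2) := by
  set C := α / 2 * ‖p‖ * ‖v - u‖ ^ 2
  have key : ∀ θ ∈ Ico (0 : ℝ) 1, θ * C ≤ -⟪p, v - u⟫ := by
    rintro θ ⟨hθ0, hθ1⟩
    have hθ1' : 0 < 1 - θ := by linarith
    set c := θ * (1 - θ) * (α / 2) * ‖v - u‖ ^ 2
    -- move the point `θ v + (1 - θ) u` a distance `c` in the direction of `-p`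
    have hy : θ • v + (1 - θ) • u - c • ‖p‖⁻¹ • p ∈ Ω := by
      refine hΩ v hv u hu θ ⟨hθ0, hθ1.le⟩ _ ?_
      rw [sub_sub_cancel_left, norm_neg, norm_smul, norm_smul, norm_inv, norm_norm,
        Real.norm_of_nonneg (by positivity)]
      exact mul_le_of_le_one_right (by positivity) inv_mul_le_one
    have hpp : ⟪p, ‖p‖⁻¹ • p⟫ = ‖p‖ := by
      rw [real_inner_smul_right, real_inner_self_eq_norm_sq]
      rcases eq_or_ne ‖p‖ 0 with h | h
      · simp [h]
      · field_simp
    have hle := isMinOn_iff.1 hmin _ hy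
    simp only [inner_sub_right, inner_add_right, real_inner_smul_right, hpp] at hle
    rw [inner_sub_right]
    refine le_of_mul_le_mul_left ?_ hθ1'
    nlinarith
  have hlim : Tendsto (fun θ : ℝ ↦ θ * C) (𝓝[<] 1) (𝓝 C) := by
    simpa only [one_mul] using
      ((continuous_mul_const C).tendsto 1).mono_left nhdsWithin_le_nhds
  have := le_of_tendsto hlim (eventually_of_mem (Ico_mem_nhdsLT zero_lt_one) key)
  linarith

theorem StronglyConvexSet.mul_norm_sub_le_of_isMinOn (hα : 0 ≤ α)
    (hΩ : StronglyConvexSet α Ω) {p q v w : E} {g : ℝ} (hv : v ∈ Ω) (hw : w ∈ Ω)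
    (hpv : IsMinOn (fun x ↦ ⟪p, x⟫) Ω v) (hqw : IsMinOn (fun x ↦ ⟪q, x⟫) Ω w)
    (hp : g ≤ ‖p‖) (hq : g ≤ ‖q‖) :
    α * g * ‖v - w‖ ≤ ‖p - q‖ := by
  have hpvw := hΩ.inner_sub_le_of_isMinOn hα hv hw hpv
  have hqwv := hΩ.inner_sub_le_of_isMinOn hα hw hv hqw
  rw [norm_sub_rev w v] at hqwv
  have hsplit : ⟪p - q, v - w⟫ = ⟪p, v - w⟫ + ⟪q, w - v⟫ := by
    rw [inner_sub_left, ← neg_sub v w, inner_neg_right, sub_eq_add_neg]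
  have hcs := (abs_le.1 (abs_real_inner_le_norm (p - q) (v - w))).1
  rcases (norm_nonneg (v - w)).eq_or_lt with h | h
  · rw [← h, mul_zero]; exact norm_nonneg _
  · refine le_of_mul_le_mul_right ?_ h
    nlinarith [mul_le_mul_of_nonneg_left (add_le_add hp hq)
      (mul_nonneg hα (sq_nonneg ‖v - w‖))]

end General

theorem le_of_succ_le_add_mul_sq {Φ d : ℕ → ℝ} {L D K : ℝ} (hL : 0 ≤ L) (h0 : Φ 0 = 0)
    (hstep : ∀ t : ℕ, Φ (t + 1) ≤ Φ t + L * (((t : ℝ) + 1) / ((t : ℝ) + 2)) * d t ^ 2)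
    (hd : ∀ t, 0 ≤ d t) (hd0 : d 0 ≤ D) (hdK : ∀ t, 1 ≤ t → d t ≤ K / ((t : ℝ) + 2))
    (t : ℕ) :
    Φ t ≤ L / 2 * (D ^ 2 + K ^ 2) := by
  -- the squared steps `K² / (t + 2)²` telescope against `K² (1 / (t + 1) - 1 / (t + 2))`
  have hinv : ∀ t, 1 ≤ t →
      Φ t ≤ L / 2 * D ^ 2 + L * K ^ 2 * (1 / 2 - 1 / ((t : ℝ) + 1)) := by
    intro t ht
    induction t, ht using Nat.le_induction with
    | base =>
      have hsq : d 0 ^ 2 ≤ D ^ 2 := pow_le_pow_left₀ (hd 0) hd0 2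
      have h1 := hstep 0
      norm_num [h0] at h1 ⊢
      nlinarith
    | succ t ht ih =>
      have hsq : d t ^ 2 ≤ (K / ((t : ℝ) + 2)) ^ 2 := pow_le_pow_left₀ (hd t) (hdK t ht) 2
      have hcoef : ((t : ℝ) + 1) / ((t : ℝ) + 2) * (K / ((t : ℝ) + 2)) ^ 2 ≤
          K ^ 2 * (1 / ((t : ℝ) + 1) - 1 / ((t : ℝ) + 2)) := by
        field_simp
        nlinarith [mul_nonneg (sq_nonneg K) (t.cast_nonneg (α := ℝ))]
      have hterm : L * (((t : ℝ) + 1) / ((t : ℝ) + 2)) * d t ^ 2 ≤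
          L * (K ^ 2 * (1 / ((t : ℝ) + 1) - 1 / ((t : ℝ) + 2))) := by
        rw [mul_assoc]
        exact mul_le_mul_of_nonneg_left
          ((mul_le_mul_of_nonneg_left hsq (by positivity)).trans hcoef) hL
      rw [show ((t + 1 : ℕ) : ℝ) + 1 = (t : ℝ) + 2 by push_cast; ring]
      linear_combination hstep t + hterm + ih
  rcases t with _ | t
  · rw [h0]; positivity
  · have : 0 ≤ L * K ^ 2 * (1 / (((t + 1 : ℕ) : ℝ) + 1)) := by positivity
    linarith [hinv (t + 1) (by omega)]

namespace PrimalAveraging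

open Finset

variable {E : Type*} [NormedAddCommGroup E] [InnerProductSpace ℝ E]

noncomputable def stepSize (t : ℕ) : ℝ := 2 / ((t : ℝ) + 2)

theorem stepSize_nonneg (t : ℕ) : 0 ≤ stepSize t := by unfold stepSize; positivity

theorem stepSize_le_one (t : ℕ) : stepSize t ≤ 1 := by
  rw [stepSize, div_le_one (by positivity)]
  linarith [t.cast_nonneg (α := ℝ)]

theorem stepSize_zero : stepSize 0 = 1 := by norm_num [stepSize]

theorem _root_.Convex.sub_stepSize_smul_add_mem {Ω : Set E} (hΩ : Convex ℝ Ω) {x y : E}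
    (hx : x ∈ Ω) (hy : y ∈ Ω) (t : ℕ) : (1 - stepSize t) • x + stepSize t • y ∈ Ω :=
  hΩ hx hy (sub_nonneg.2 (stepSize_le_one t)) (stepSize_nonneg t) (sub_add_cancel 1 _)

theorem sum_Icc_natCast (t : ℕ) : ∑ i ∈ Icc 1 t, (i : ℝ) = t * (t + 1) / 2 := by
  induction t with
  | zero => simp
  | succ t ih =>
    rw [sum_Icc_succ_top (by omega), ih]
    push_cast
    ring

def IsWeightedAverage (p q : ℕ → E) : Prop :=
  ∀ t : ℕ, 1 ≤ t →
    p t = (2 / ((t : ℝ) * ((t : ℝ) + 1))) • ∑ i ∈ Icc 1 t, (i : ℝ) • q (i - 1)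

namespace IsWeightedAverage

variable {p q : ℕ → E} {G : ℝ}

theorem sum_eq_smul (hp : IsWeightedAverage p q) (t : ℕ) :
    ∑ i ∈ Icc 1 t, (i : ℝ) • q (i - 1) = ((t : ℝ) * ((t : ℝ) + 1) / 2) • p t := by
  rcases Nat.eq_zero_or_pos t with rfl | ht
  · simp
  · have : (t : ℝ) ≠ 0 := by positivity
    rw [hp t ht, smul_smul]
    field_simp
    rw [one_smul]

theorem succ_eq (hp : IsWeightedAverage p q) (t : ℕ) :
    p (t + 1) = (1 - stepSize t) • p t + stepSize t • q t := by
  have h := hp (t + 1) t.succ_pos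
  rw [sum_Icc_succ_top (by omega), hp.sum_eq_smul t, Nat.add_sub_cancel] at h
  rw [h, stepSize]
  push_cast
  match_scalars <;> field_simp <;> ring

theorem norm_le (hp : IsWeightedAverage p q) (hq : ∀ t, ‖q t‖ ≤ G) {t : ℕ} (ht : 1 ≤ t) :
    ‖p t‖ ≤ G := by
  induction t, ht using Nat.le_induction with
  | base => simpa [hp.succ_eq 0, stepSize_zero] using hq 0
  | succ t _ ih =>
    rw [← mem_closedBall_zero_iff, hp.succ_eq t]
    exact (convex_closedBall 0 G).sub_stepSize_smul_add_mem (mem_closedBall_zero_iff.2 ih)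
      (mem_closedBall_zero_iff.2 (hq t)) t

theorem norm_succ_sub_le (hp : IsWeightedAverage p q) (hq : ∀ t, ‖q t‖ ≤ G) {t : ℕ}
    (ht : 1 ≤ t) : ‖p (t + 1) - p t‖ ≤ stepSize t * (2 * G) := by
  have h : p (t + 1) - p t = stepSize t • (q t - p t) := by rw [hp.succ_eq t]; module
  rw [h, norm_smul, Real.norm_of_nonneg (stepSize_nonneg t), two_mul]
  exact mul_le_mul_of_nonneg_left
    ((norm_sub_le _ _).trans (add_le_add (hq t) (hp.norm_le hq ht))) (stepSize_nonneg t)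

end IsWeightedAverage

noncomputable def weightedLinearization (f : E → ℝ) (f' : E → E) (z : ℕ → E) (t : ℕ)
    (u : E) : ℝ :=
  ∑ i ∈ Icc 1 t, (i : ℝ) * (f (z (i - 1)) + ⟪f' (z (i - 1)), u - z (i - 1)⟫)

noncomputable def potential (f : E → ℝ) (f' : E → E) (w v z : ℕ → E) (t : ℕ) : ℝ :=
  (t : ℝ) * ((t : ℝ) + 1) / 2 * f (w t) - weightedLinearization f f' z t (v t)

variable {f : E → ℝ} {f' : E → E} {w v z p : ℕ → E}

theorem weightedLinearization_succ (t : ℕ) (u : E) :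
    weightedLinearization f f' z (t + 1) u =
      weightedLinearization f f' z t u + ((t : ℝ) + 1) * (f (z t) + ⟪f' (z t), u - z t⟫) := by
  rw [weightedLinearization, sum_Icc_succ_top (by omega), Nat.add_sub_cancel]
  push_cast
  rfl

theorem weightedLinearization_sub (t : ℕ) (u u' : E) :
    weightedLinearization f f' z t u - weightedLinearization f f' z t u' =
      ⟪∑ i ∈ Icc 1 t, (i : ℝ) • f' (z (i - 1)), u - u'⟫ := by
  rw [weightedLinearization, weightedLinearization, ← sum_sub_distrib, sum_inner]
  refine sum_congr rfl fun i _ ↦ ?_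
  rw [real_inner_smul_left, ← sub_sub_sub_cancel_right u u' (z (i - 1)),
    inner_sub_right _ (u - _)]
  ring

theorem weightedLinearization_le (hconv : ConvexOn ℝ Set.univ f)
    (hdiff : ∀ x : E, HasFDerivAt f (innerSL ℝ (f' x)) x) (t : ℕ) (u : E) :
    weightedLinearization f f' z t u ≤ (t : ℝ) * ((t : ℝ) + 1) / 2 * f u := by
  rw [weightedLinearization, ← sum_Icc_natCast, sum_mul]
  exact sum_le_sum fun i _ ↦
    mul_le_mul_of_nonneg_left (hconv.add_inner_sub_le (hdiff _) u) i.cast_nonneg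

theorem weightedLinearization_le_of_isMinOn {Ω : Set E}
    (hp : IsWeightedAverage p fun i ↦ f' (z i)) {t : ℕ} {x u : E}
    (hmin : IsMinOn (fun y ↦ ⟪p t, y⟫) Ω x) (hu : u ∈ Ω) :
    weightedLinearization f f' z t x ≤ weightedLinearization f f' z t u := by
  have h := weightedLinearization_sub (f := f) (f' := f') (z := z) t x u
  rw [hp.sum_eq_smul t, real_inner_smul_left, inner_sub_right] at h
  have hxu := isMinOn_iff.1 hmin u hu
  have hA : 0 ≤ (t : ℝ) * ((t : ℝ) + 1) / 2 := by positivity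
  nlinarith

theorem potential_zero : potential f f' w v z 0 = 0 := by
  simp [potential, weightedLinearization]

theorem potential_succ_le {L : ℝ} (hconv : ConvexOn ℝ Set.univ f)
    (hdiff : ∀ x : E, HasFDerivAt f (innerSL ℝ (f' x)) x)
    (hsmooth : ∀ x y : E, |f x - f y - ⟪f' y, x - y⟫| ≤ L / 2 * ‖x - y‖ ^ 2)
    (hz : ∀ t, z t = (1 - stepSize t) • w t + stepSize t • v t)
    (hw : ∀ t, w (t + 1) = (1 - stepSize t) • w t + stepSize t • v (t + 1)) (t : ℕ)
    (hmono :
      weightedLinearization f f' z t (v t) ≤ weightedLinearization f f' z t (v (t + 1))) :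
    potential f f' w v z (t + 1) ≤
      potential f f' w v z t + L * (((t : ℝ) + 1) / ((t : ℝ) + 2)) * ‖v (t + 1) - v t‖ ^ 2 := by
  set γ := stepSize t with hγ
  have hdescent : f (w (t + 1)) ≤
      f (z t) + ⟪f' (z t), w (t + 1) - z t⟫ + L / 2 * ‖w (t + 1) - z t‖ ^ 2 := by
    linarith [le_abs_self (f (w (t + 1)) - f (z t) - ⟪f' (z t), w (t + 1) - z t⟫),
      hsmooth (w (t + 1)) (z t)]
  have hsplit : ⟪f' (z t), w (t + 1) - z t⟫ =
      (1 - γ) * ⟪f' (z t), w t - z t⟫ + γ * ⟪f' (z t), v (t + 1) - z t⟫ := by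
    rw [← real_inner_smul_right, ← real_inner_smul_right, ← inner_add_right, hw]
    congr 1
    module
  have hgap : ‖w (t + 1) - z t‖ = γ * ‖v (t + 1) - v t‖ := by
    have h : w (t + 1) - z t = γ • (v (t + 1) - v t) := by rw [hw, hz]; module
    rw [h, norm_smul, Real.norm_of_nonneg (stepSize_nonneg t)]
  have hgrad := hconv.add_inner_sub_le (hdiff (z t)) (w t)
  have hsucc := weightedLinearization_succ (f := f) (f' := f') (z := z) t (v (t + 1))
  have h₁ :
      ((t : ℝ) + 1) * ((t : ℝ) + 1 + 1) / 2 * (1 - γ) = (t : ℝ) * ((t : ℝ) + 1) / 2 := by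
    rw [hγ, stepSize]; field_simp; ring
  have h₂ : ((t : ℝ) + 1) * ((t : ℝ) + 1 + 1) / 2 * γ = (t : ℝ) + 1 := by
    rw [hγ, stepSize]; field_simp; ring
  have h₃ : ((t : ℝ) + 1) * ((t : ℝ) + 1 + 1) / 2 * (L / 2 * γ ^ 2) =
      L * (((t : ℝ) + 1) / ((t : ℝ) + 2)) := by
    rw [hγ, stepSize]; field_simp; ring
  rw [hsplit, hgap] at hdescent
  simp only [potential]
  push_cast
  linear_combination ((t : ℝ) + 1) * ((t : ℝ) + 1 + 1) / 2 * hdescent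
    + (t : ℝ) * ((t : ℝ) + 1) / 2 * hgrad + hmono - hsucc
    + ⟪f' (z t), w t - z t⟫ * h₁ + ⟪f' (z t), v (t + 1) - z t⟫ * h₂
    + ‖v (t + 1) - v t‖ ^ 2 * h₃

theorem iterates_mem {Ω : Set E} (hΩ : Convex ℝ Ω) (hv : ∀ t, v t ∈ Ω) (hw0 : w 0 ∈ Ω)
    (hz : ∀ t, z t = (1 - stepSize t) • w t + stepSize t • v t)
    (hw : ∀ t, w (t + 1) = (1 - stepSize t) • w t + stepSize t • v (t + 1)) (t : ℕ) :
    w t ∈ Ω ∧ z t ∈ Ω := by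
  have hwt : w t ∈ Ω := by
    induction t with
    | zero => exact hw0
    | succ t ih => exact hw t ▸ hΩ.sub_stepSize_smul_add_mem ih (hv _) t
  exact ⟨hwt, hz t ▸ hΩ.sub_stepSize_smul_add_mem hwt (hv t) t⟩

theorem norm_succ_sub_le_of_isMinOn {α g G : ℝ} {Ω : Set E} {q : ℕ → E} (hα : 0 < α)
    (hg : 0 < g) (hΩ : StronglyConvexSet α Ω) (hp : IsWeightedAverage p q)
    (hq : ∀ t, ‖q t‖ ≤ G) (hv : ∀ t, v t ∈ Ω)
    (hmin : ∀ t, 1 ≤ t → IsMinOn (fun u ↦ ⟪p t, u⟫) Ω (v t)) (hpg : ∀ t, 1 ≤ t → g ≤ ‖p t‖)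
    {t : ℕ} (ht : 1 ≤ t) :
    ‖v (t + 1) - v t‖ ≤ 4 * G / (α * g) / ((t : ℝ) + 2) := by
  have h := (hΩ.mul_norm_sub_le_of_isMinOn hα.le (hv _) (hv t) (hmin _ (by omega)) (hmin t ht)
    (hpg _ (by omega)) (hpg t ht)).trans (hp.norm_succ_sub_le hq ht)
  rw [stepSize, ← le_div_iff₀' (mul_pos hα hg)] at h
  exact h.trans_eq (by field_simp; ring)

end PrimalAveraging

open PrimalAveraging in
theorem primal_averaging_O_inv_t_sq_general
    {E : Type*} [NormedAddCommGroup E] [InnerProductSpace ℝ E]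
    {α : ℝ} (hα : 0 < α) {Ω : Set E}
    (hΩ : StronglyConvexSet α Ω)
    {D : ℝ} (hdiam : ∀ u ∈ Ω, ∀ v ∈ Ω, ‖u - v‖ ≤ D)
    (f : E → ℝ) (f' : E → E) {L : ℝ} (hL : 0 ≤ L)
    (hconv : ConvexOn ℝ Set.univ f)
    (hdiff : ∀ x : E, HasFDerivAt f (innerSL ℝ (f' x)) x)
    (hsmooth : ∀ x y : E, |f x - f y - ⟪f' y, x - y⟫| ≤ L / 2 * ‖x - y‖ ^ 2)
    {G : ℝ} (hG : ∀ x ∈ Ω, ‖f' x‖ ≤ G)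
    (w v z p : ℕ → E)
    (hw0 : w 0 = v 0) (hv0 : v 0 ∈ Ω)
    (hz : ∀ t : ℕ, 1 ≤ t →
      z (t - 1) = (1 - 2 / ((t : ℝ) + 1)) • w (t - 1) + (2 / ((t : ℝ) + 1)) • v (t - 1))
    (hp : ∀ t : ℕ, 1 ≤ t →
      p t = (2 / ((t : ℝ) * ((t : ℝ) + 1))) • ∑ i ∈ Finset.Icc 1 t, (i : ℝ) • f' (z (i - 1)))
    (hvmem : ∀ t : ℕ, 1 ≤ t → v t ∈ Ω)
    (horacle : ∀ t : ℕ, 1 ≤ t → ∀ u ∈ Ω, ⟪p t, v t⟫ ≤ ⟪p t, u⟫)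
    (hw : ∀ t : ℕ, 1 ≤ t →
      w t = (1 - 2 / ((t : ℝ) + 1)) • w (t - 1) + (2 / ((t : ℝ) + 1)) • v t)
    {g : ℝ} (hg : 0 < g) (hpg : ∀ t : ℕ, 1 ≤ t → g ≤ ‖p t‖) :
    ∀ wstar ∈ Ω, ∀ t : ℕ, 1 ≤ t →
      f (w t) - f wstar ≤
        2 * L / ((t : ℝ) * ((t : ℝ) + 1)) * (D ^ 2 + 16 * G ^ 2 / (α ^ 2 * g ^ 2)) := by
  have hz' : ∀ t, z t = (1 - stepSize t) • w t + stepSize t • v t := fun t ↦ by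
    simpa [stepSize, add_assoc, one_add_one_eq_two] using hz (t + 1) (by omega)
  have hw' : ∀ t, w (t + 1) = (1 - stepSize t) • w t + stepSize t • v (t + 1) := fun t ↦ by
    simpa [stepSize, add_assoc, one_add_one_eq_two] using hw (t + 1) (by omega)
  have hpavg : IsWeightedAverage p fun i ↦ f' (z i) := hp
  have hvΩ : ∀ t, v t ∈ Ω := fun t ↦ t.eq_zero_or_pos.elim (fun h ↦ h ▸ hv0) (hvmem t)
  have hmem := iterates_mem (hΩ.convex hα.le) hvΩ (hw0 ▸ hv0) hz' hw'
  have hgrad : ∀ t, ‖f' (z t)‖ ≤ G := fun t ↦ hG _ (hmem t).2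
  have hmin : ∀ t, 1 ≤ t → IsMinOn (fun u ↦ ⟪p t, u⟫) Ω (v t) := fun t ht ↦
    isMinOn_iff.2 (horacle t ht)
  have hmono : ∀ t, weightedLinearization f f' z t (v t) ≤
      weightedLinearization f f' z t (v (t + 1)) := by
    rintro (_ | t)
    · simp [weightedLinearization]
    · exact weightedLinearization_le_of_isMinOn hpavg (hmin _ (by omega)) (hvΩ _)
  intro wstar hwstar t ht
  have hΦ := le_of_succ_le_add_mul_sq hL potential_zero
    (fun t ↦ potential_succ_le hconv hdiff hsmooth hz' hw' t (hmono t))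
    (fun _ ↦ norm_nonneg _) (hdiam _ (hvΩ 1) _ hv0)
    (fun _ ↦ norm_succ_sub_le_of_isMinOn hα hg hΩ hpavg hgrad hvΩ hmin hpg) t
  have hℓ := (weightedLinearization_le_of_isMinOn hpavg (hmin t ht) hwstar).trans
    (weightedLinearization_le hconv hdiff t wstar)
  have hA : 0 < (t : ℝ) * ((t : ℝ) + 1) := by positivity
  have hLM : 0 ≤ L * (D ^ 2 + 16 * G ^ 2 / (α ^ 2 * g ^ 2)) := by positivity
  rw [potential] at hΦ
  rw [div_mul_eq_mul_div, le_div_iff₀ hA]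
  linear_combination 2 * hΦ + 2 * hℓ + hLM

/-- Deterministic core of Theorem 1: Primal Averaging with option (A) over a compact
`α`-strongly convex set of diameter at most `D`, with gradients bounded by `G` and averaged
gradients bounded below by `g > 0`, attains
`f(w_t) − f(w*) ≤ (2L/(t(t+1)))·(D² + 16G²/(α²g²))`. -/
theorem primal_averaging_O_inv_t_sq
    {E : Type*} [NormedAddCommGroup E] [InnerProductSpace ℝ E]
    {α : ℝ} (hα : 0 < α) {Ω : Set E} (hne : Ω.Nonempty) (hcomp : IsCompact Ω)
    (hΩ : StronglyConvexSet α Ω)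
    {D : ℝ} (hdiam : ∀ u ∈ Ω, ∀ v ∈ Ω, ‖u - v‖ ≤ D)
    (f : E → ℝ) (f' : E → E) {L : ℝ} (hL : 0 ≤ L)
    (hconv : ConvexOn ℝ Set.univ f)
    (hdiff : ∀ x : E, HasFDerivAt f (innerSL ℝ (f' x)) x)
    (hsmooth : ∀ x y : E, |f x - f y - ⟪f' y, x - y⟫| ≤ L / 2 * ‖x - y‖ ^ 2)
    {G : ℝ} (hG : ∀ x ∈ Ω, ‖f' x‖ ≤ G)
    (w v z p : ℕ → E)
    (hw0 : w 0 = v 0) (hv0 : v 0 ∈ Ω)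
    (hz : ∀ t : ℕ, 1 ≤ t →
      z (t - 1) = (1 - 2 / ((t : ℝ) + 1)) • w (t - 1) + (2 / ((t : ℝ) + 1)) • v (t - 1))
    (hp : ∀ t : ℕ, 1 ≤ t →
      p t = (2 / ((t : ℝ) * ((t : ℝ) + 1))) • ∑ i ∈ Finset.Icc 1 t, (i : ℝ) • f' (z (i - 1)))
    (hvmem : ∀ t : ℕ, 1 ≤ t → v t ∈ Ω)
    (horacle : ∀ t : ℕ, 1 ≤ t → ∀ u ∈ Ω, ⟪p t, v t⟫ ≤ ⟪p t, u⟫)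
    (hw : ∀ t : ℕ, 1 ≤ t →
      w t = (1 - 2 / ((t : ℝ) + 1)) • w (t - 1) + (2 / ((t : ℝ) + 1)) • v t)
    {g : ℝ} (hg : 0 < g) (hpg : ∀ t : ℕ, 1 ≤ t → g ≤ ‖p t‖) :
    ∀ wstar ∈ Ω, ∀ t : ℕ, 1 ≤ t →
      f (w t) - f wstar ≤
        2 * L / ((t : ℝ) * ((t : ℝ) + 1)) * (D ^ 2 + 16 * G ^ 2 / (α ^ 2 * g ^ 2)) :=
  primal_averaging_O_inv_t_sq_general hα hΩ hdiam f f' hL hconv hdiff hsmooth hG w v z p hw0 hv0 hz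
    hp hvmem horacle hw hg hpg
end

section
/- Let E be a real inner product space, α > 0, and let Ω ⊆ E be a nonempty compact α-strongly convex set. Let f : E → ℝ be differentiable with gradient ∇f and L-smooth (L > 0). Let w ∈ Ω with ∇f(w) ≠ 0, and let v ∈ Ω satisfy ⟨∇f(w), v⟩ ≤ ⟨∇f(w), u⟩ for all u ∈ Ω. Define γ = 1 if L < α‖∇f(w)‖/4, and γ = α‖∇f(w)‖/(4L) otherwise. Then γ ∈ (0,1] and for every w* ∈ Ω, f(w + γ(v − w)) ≤ f(w) + (γ/2)·⟨w* − w, ∇f(w)⟩. -/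
open RealInnerProductSpace

section StronglyConvexSet

variable {E : Type*} [NormedAddCommGroup E] [InnerProductSpace ℝ E] {α : ℝ} {Ω : Set E}

theorem StronglyConvexSet.midpoint_add_mem (hΩ : StronglyConvexSet α Ω) {u v : E}
    (hu : u ∈ Ω) (hv : v ∈ Ω) {z : E} (hz : ‖z‖ ≤ α / 8 * ‖u - v‖ ^ 2) :
    midpoint ℝ u v + z ∈ Ω := by
  refine hΩ u hu v hv (1 / 2) (by norm_num) _ ?_
  rw [midpoint_eq_smul_add, smul_add]
  norm_num
  linarith

theorem StronglyConvexSet.mul_norm_sub_sq_le_inner_sub (hΩ : StronglyConvexSet α Ω)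
    (hα : 0 ≤ α) {u v : E} (hu : u ∈ Ω) (hv : v ∈ Ω) {g : E} (hmin : IsMinOn (⟪g, ·⟫) Ω v) :
    α * ‖g‖ / 4 * ‖u - v‖ ^ 2 ≤ ⟪g, u - v⟫ := by
  set c := α / 8 * ‖u - v‖ ^ 2
  have hc : 0 ≤ c := by positivity
  have hunit : ⟪g, ‖g‖⁻¹ • g⟫ = ‖g‖ := by
    rw [real_inner_smul_right, real_inner_self_eq_norm_sq]
    rcases eq_or_ne ‖g‖ 0 with h | h
    · simp [h]
    · field_simp
  have hpushed : midpoint ℝ u v + -c • (‖g‖⁻¹ • g) ∈ Ω := by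
    refine hΩ.midpoint_add_mem hu hv ?_
    rw [norm_smul, norm_smul, norm_inv, norm_norm, Real.norm_eq_abs, abs_neg, abs_of_nonneg hc]
    calc c * (‖g‖⁻¹ * ‖g‖) ≤ c * 1 := by gcongr; exact inv_mul_le_one
      _ = c := mul_one c
  have hle := isMinOn_iff.mp hmin _ hpushed
  rw [inner_add_right, real_inner_smul_right, hunit, midpoint_eq_smul_add, real_inner_smul_right,
    inner_add_right] at hle
  rw [inner_sub_right]
  norm_num [c] at hle
  linarith

end StronglyConvexSet

theorem ite_lt_eq_min_one_div {a L : ℝ} (hL : 0 < L) :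
    (if L < a / 4 then 1 else a / (4 * L)) = min 1 (a / (4 * L)) := by
  have h : 1 ≤ a / (4 * L) ↔ L ≤ a / 4 := by
    rw [one_le_div (by positivity)]
    constructor <;> intro <;> linarith
  split_ifs with hlt
  · exact (min_eq_left (h.mpr hlt.le)).symm
  · exact (min_eq_right (by rw [div_le_one (by positivity)]; linarith)).symm

theorem apply_add_smul_le_add_half_inner {E : Type*} [NormedAddCommGroup E]
    [InnerProductSpace ℝ E] {f : E → ℝ} {f' : E → E} {L : ℝ}
    (hsmooth : ∀ x y : E, |f x - f y - ⟪f' y, x - y⟫| ≤ L / 2 * ‖x - y‖ ^ 2)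
    {w d : E} {γ : ℝ} (hγ : 0 ≤ γ) (hd : L * γ * ‖d‖ ^ 2 ≤ -⟪f' w, d⟫) :
    f (w + γ • d) ≤ f w + γ / 2 * ⟪f' w, d⟫ := by
  have hupper := (abs_le.mp (hsmooth (w + γ • d) w)).2
  rw [add_sub_cancel_left, real_inner_smul_right, norm_smul, Real.norm_eq_abs, abs_of_nonneg hγ,
    mul_pow] at hupper
  nlinarith [mul_le_mul_of_nonneg_left hd (by positivity : 0 ≤ γ / 2)]

theorem garber_hazan_per_step_general
    {E : Type*} [NormedAddCommGroup E] [InnerProductSpace ℝ E]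
    {α : ℝ} (hα : 0 < α) {Ω : Set E}
    (hΩ : StronglyConvexSet α Ω)
    (f : E → ℝ) (f' : E → E) {L : ℝ} (hL : 0 < L)
    (hsmooth : ∀ x y : E, |f x - f y - ⟪f' y, x - y⟫| ≤ L / 2 * ‖x - y‖ ^ 2)
    {w : E} (hw : w ∈ Ω) (hgw : f' w ≠ 0)
    {v : E} (hv : v ∈ Ω) (horacle : ∀ u ∈ Ω, ⟪f' w, v⟫ ≤ ⟪f' w, u⟫)
    {γ : ℝ} (hγdef : γ = if L < α * ‖f' w‖ / 4 then 1 else α * ‖f' w‖ / (4 * L)) :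
    γ ∈ Set.Ioc (0 : ℝ) 1 ∧
      ∀ wstar ∈ Ω, f (w + γ • (v - w)) ≤ f w + γ / 2 * ⟪wstar - w, f' w⟫ := by
  rw [ite_lt_eq_min_one_div hL] at hγdef
  have hγpos : 0 < γ := hγdef ▸ lt_min one_pos (by positivity [norm_pos_iff.mpr hgw])
  have hLγ : L * γ ≤ α * ‖f' w‖ / 4 :=
    calc L * γ ≤ L * (α * ‖f' w‖ / (4 * L)) := by rw [hγdef]; gcongr; exact min_le_right _ _
      _ = α * ‖f' w‖ / 4 := by field_simp
  have hgap := hΩ.mul_norm_sub_sq_le_inner_sub hα.le hw hv (isMinOn_iff.mpr horacle)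
  have hdescent : f (w + γ • (v - w)) ≤ f w + γ / 2 * ⟪f' w, v - w⟫ := by
    refine apply_add_smul_le_add_half_inner hsmooth hγpos.le ?_
    rw [norm_sub_rev, ← inner_neg_right, neg_sub]
    exact (mul_le_mul_of_nonneg_right hLγ (sq_nonneg _)).trans hgap
  refine ⟨⟨hγpos, hγdef ▸ min_le_left _ _⟩, fun wstar hwstar => hdescent.trans ?_⟩
  rw [real_inner_comm (f' w) (wstar - w), inner_sub_right, inner_sub_right]
  gcongr
  exact horacle wstar hwstar

/-- Garber–Hazan per-step guarantee over strongly convex sets (no convexity of `f`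
required): with `γ = 1` if `L < α‖∇f(w)‖/4` and `γ = α‖∇f(w)‖/(4L)` otherwise, we have
`γ ∈ (0,1]` and `f(w + γ(v − w)) ≤ f(w) + (γ/2)⟨w* − w, ∇f(w)⟩` for every `w* ∈ Ω`. -/
theorem garber_hazan_per_step
    {E : Type*} [NormedAddCommGroup E] [InnerProductSpace ℝ E]
    {α : ℝ} (hα : 0 < α) {Ω : Set E} (hne : Ω.Nonempty) (hcomp : IsCompact Ω)
    (hΩ : StronglyConvexSet α Ω)
    (f : E → ℝ) (f' : E → E) {L : ℝ} (hL : 0 < L)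
    (hdiff : ∀ x : E, HasFDerivAt f (innerSL ℝ (f' x)) x)
    (hsmooth : ∀ x y : E, |f x - f y - ⟪f' y, x - y⟫| ≤ L / 2 * ‖x - y‖ ^ 2)
    {w : E} (hw : w ∈ Ω) (hgw : f' w ≠ 0)
    {v : E} (hv : v ∈ Ω) (horacle : ∀ u ∈ Ω, ⟪f' w, v⟫ ≤ ⟪f' w, u⟫)
    {γ : ℝ} (hγdef : γ = if L < α * ‖f' w‖ / 4 then 1 else α * ‖f' w‖ / (4 * L)) :
    γ ∈ Set.Ioc (0 : ℝ) 1 ∧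
      ∀ wstar ∈ Ω, f (w + γ • (v - w)) ≤ f w + γ / 2 * ⟪wstar - w, f' w⟫ :=
  garber_hazan_per_step_general hα hΩ f f' hL hsmooth hw hgw hv horacle hγdef
end

section
/- Let E be a real inner product space, α > 0, and let Ω ⊆ E be a nonempty compact α-strongly convex set. Let f : E → ℝ be differentiable with gradient ∇f and L-smooth (L > 0). Let ε, κ > 0, let w, w* ∈ Ω, suppose ∇f(w) ≠ 0 and ⟨∇f(w), y − w⟩ ≤ 0 for every y ∈ E with ‖y − w*‖ ≤ ε/κ, and let v ∈ Ω satisfy ⟨∇f(w), v⟩ ≤ ⟨∇f(w), u⟩ for all u ∈ Ω. Then there exists γ ∈ [0,1] such that f(w + γ(v − w)) ≤ f(w) − min( ε‖∇f(w)‖/(2κ), α·ε·‖∇f(w)‖²/(8κL) ). -/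
open RealInnerProductSpace

/-!
Write `g = ∇f(w)` and `d = v - w`. Testing the local quasi-convexity condition at the point of
the ball `B(w*, ε/κ)` furthest in the direction `g` gives `⟪g, d⟫ ≤ -(ε/κ)‖g‖`, since `v`
minimizes `⟪g, ·⟫` over `Ω ∋ w*`. Testing the minimality of `v` against the point
`(w + v)/2 - (α/8)‖d‖² g/‖g‖`, which lies in `Ω` by strong convexity, gives
`(α/4)‖d‖²‖g‖ ≤ -⟪g, d⟫`. By smoothness, `f(w + γd) ≤ f(w) + γ⟪g, d⟫ + (L/2)γ²‖d‖²`, and the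
step `γ = min(1, α‖g‖/(4L))` turns these two bounds into the claimed decrease.
-/

lemma norm_inv_norm_smul_le_one_s14 {E : Type*} [SeminormedAddCommGroup E] [NormedSpace ℝ E]
    (g : E) : ‖‖g‖⁻¹ • g‖ ≤ 1 :=
  mem_closedBall_zero_iff.mp (inv_norm_smul_mem_unitClosedBall g)

section InnerProductSpace

variable {E : Type*} [NormedAddCommGroup E] [InnerProductSpace ℝ E]

lemma real_inner_inv_norm_smul_self (g : E) : ⟪g, ‖g‖⁻¹ • g⟫ = ‖g‖ := by
  rw [real_inner_smul_right, real_inner_self_eq_norm_mul_norm]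
  by_cases hg : ‖g‖ = 0
  · simp [hg]
  · field_simp

lemma inner_sub_le_neg_mul_norm_of_forall_closedBall {g w c : E} {r : ℝ} (hr : 0 ≤ r)
    (h : ∀ y : E, ‖y - c‖ ≤ r → ⟪g, y - w⟫ ≤ 0) : ⟪g, c - w⟫ ≤ -(r * ‖g‖) := by
  have hy := h (c + r • (‖g‖⁻¹ • g)) <| by
    rw [add_sub_cancel_left, norm_smul_of_nonneg hr]
    exact mul_le_of_le_one_right hr (norm_inv_norm_smul_le_one_s14 g)
  rw [add_sub_right_comm, inner_add_right, real_inner_smul_right,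
    real_inner_inv_norm_smul_self] at hy
  linarith

lemma StronglyConvexSet.inner_sub_le_of_forall_inner_le_s14 {α : ℝ} (hα : 0 ≤ α) {Ω : Set E}
    (hΩ : StronglyConvexSet α Ω) {g u v : E} (hu : u ∈ Ω) (hv : v ∈ Ω)
    (hmin : ∀ x ∈ Ω, ⟪g, v⟫ ≤ ⟪g, x⟫) :
    ⟪g, v - u⟫ ≤ -(α / 4 * ‖v - u‖ ^ 2 * ‖g‖) := by
  set c := α / 8 * ‖u - v‖ ^ 2 with hc
  have hc0 : 0 ≤ c := by positivity
  have hmem : (1 / 2 : ℝ) • u + (1 / 2 : ℝ) • v - c • (‖g‖⁻¹ • g) ∈ Ω := by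
    refine hΩ u hu v hv (1 / 2) (by norm_num) _ ?_
    have hdiff : (1 / 2 : ℝ) • u + (1 / 2 : ℝ) • v - c • (‖g‖⁻¹ • g) -
        ((1 / 2 : ℝ) • u + (1 - 1 / 2 : ℝ) • v) = -(c • (‖g‖⁻¹ • g)) := by
      norm_num
    calc ‖_‖ = c * ‖‖g‖⁻¹ • g‖ := by rw [hdiff, norm_neg, norm_smul_of_nonneg hc0]
      _ ≤ c := mul_le_of_le_one_right hc0 (norm_inv_norm_smul_le_one_s14 g)
      _ = _ := by ring
  have hle := hmin _ hmem
  rw [inner_sub_right, inner_add_right, real_inner_smul_right, real_inner_smul_right,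
    real_inner_smul_right, real_inner_inv_norm_smul_self, hc] at hle
  rw [inner_sub_right, norm_sub_rev]
  linarith

lemma le_add_smul_inner_add_of_abs_sub_inner_le {f : E → ℝ} {f' : E → E} {L : ℝ}
    (hsmooth : ∀ x y : E, |f x - f y - ⟪f' y, x - y⟫| ≤ L / 2 * ‖x - y‖ ^ 2)
    (w d : E) (γ : ℝ) :
    f (w + γ • d) ≤ f w + γ * ⟪f' w, d⟫ + L / 2 * γ ^ 2 * ‖d‖ ^ 2 := by
  have h := (abs_le.mp (hsmooth (w + γ • d) w)).2
  rw [add_sub_cancel_left, real_inner_smul_right, norm_smul, Real.norm_eq_abs, mul_pow,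
    sq_abs] at h
  linarith

end InnerProductSpace

/-- The step `γ = min(1, a/L)` keeps the quadratic term below half the linear one. -/
lemma exists_mem_Icc_min_le_mul_sub_sq {a L C D : ℝ} (ha : 0 ≤ a) (hL : 0 ≤ L)
    (h : a * D ^ 2 ≤ C) :
    ∃ γ ∈ Set.Icc (0 : ℝ) 1, min (C / 2) (a * C / (2 * L)) ≤ γ * C - L / 2 * γ ^ 2 * D ^ 2 := by
  set γ := min 1 (a / L)
  have hγ0 : 0 ≤ γ := le_min zero_le_one (div_nonneg ha hL)
  have hC : 0 ≤ C := (mul_nonneg ha (sq_nonneg D)).trans h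
  have hLγ : L * γ ≤ a := by
    rcases hL.eq_or_lt with rfl | hLpos
    · simpa using ha
    · exact (mul_le_mul_of_nonneg_left (min_le_right _ _) hL).trans_eq (mul_div_cancel₀ a hLpos.ne')
  have hquad : L / 2 * γ ^ 2 * D ^ 2 ≤ γ * C / 2 := by
    have := mul_le_mul_of_nonneg_right hLγ (sq_nonneg D)
    nlinarith [mul_le_mul_of_nonneg_left (this.trans h) hγ0]
  have hmin : γ * C / 2 = min (C / 2) (a * C / (2 * L)) := by
    rw [mul_div_assoc, min_mul_of_nonneg _ _ (div_nonneg hC zero_le_two), one_mul,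
      div_mul_div_comm, mul_comm L 2]
  exact ⟨γ, ⟨hγ0, min_le_left _ _⟩, by linarith⟩

theorem frank_wolfe_slqc_decrease_general
    {E : Type*} [NormedAddCommGroup E] [InnerProductSpace ℝ E]
    {α : ℝ} (hα : 0 < α) {Ω : Set E}
    (hΩ : StronglyConvexSet α Ω)
    (f : E → ℝ) (f' : E → E) {L : ℝ} (hL : 0 < L)
    (hsmooth : ∀ x y : E, |f x - f y - ⟪f' y, x - y⟫| ≤ L / 2 * ‖x - y‖ ^ 2)
    {ε κ : ℝ} (hε : 0 < ε) (hκ : 0 < κ)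
    {w wstar : E} (hw : w ∈ Ω) (hwstar : wstar ∈ Ω)
    (hslqc : ∀ y : E, ‖y - wstar‖ ≤ ε / κ → ⟪f' w, y - w⟫ ≤ 0)
    {v : E} (hv : v ∈ Ω) (horacle : ∀ u ∈ Ω, ⟪f' w, v⟫ ≤ ⟪f' w, u⟫) :
    ∃ γ ∈ Set.Icc (0 : ℝ) 1,
      f (w + γ • (v - w)) ≤
        f w - min (ε * ‖f' w‖ / (2 * κ)) (α * ε * ‖f' w‖ ^ 2 / (8 * κ * L)) := by
  set g := f' w
  have hball := inner_sub_le_neg_mul_norm_of_forall_closedBall (div_nonneg hε.le hκ.le) hslqc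
  have hgap : ε / κ * ‖g‖ ≤ -⟪g, v - w⟫ := by
    have := horacle wstar hwstar
    rw [inner_sub_right] at hball ⊢
    linarith
  have hcurv : α * ‖g‖ / 4 * ‖v - w‖ ^ 2 ≤ -⟪g, v - w⟫ := by
    have := hΩ.inner_sub_le_of_forall_inner_le_s14 hα.le hw hv horacle
    linarith
  obtain ⟨γ, hγ, hgain⟩ := exists_mem_Icc_min_le_mul_sub_sq (by positivity) hL.le hcurv
  refine ⟨γ, hγ, ?_⟩
  have hmin : min (ε * ‖g‖ / (2 * κ)) (α * ε * ‖g‖ ^ 2 / (8 * κ * L)) ≤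
      min (-⟪g, v - w⟫ / 2) (α * ‖g‖ / 4 * -⟪g, v - w⟫ / (2 * L)) := by
    have h₁ : ε * ‖g‖ / (2 * κ) = ε / κ * ‖g‖ / 2 := by field_simp
    have h₂ : α * ε * ‖g‖ ^ 2 / (8 * κ * L) = α * ‖g‖ / 4 * (ε / κ * ‖g‖) / (2 * L) := by
      field_simp; ring
    rw [h₁, h₂]
    gcongr
  linarith [le_add_smul_inner_add_of_abs_sub_inner_le hsmooth w (v - w) γ]

/-- Per-iteration decrease of Frank–Wolfe with exact line search on strictly-locally-
quasi-convex objectives over strongly convex sets: there is a step size `γ ∈ [0,1]` with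
`f(w + γ(v − w)) ≤ f(w) − min(ε‖∇f(w)‖/(2κ), αε‖∇f(w)‖²/(8κL))`. -/
theorem frank_wolfe_slqc_decrease
    {E : Type*} [NormedAddCommGroup E] [InnerProductSpace ℝ E]
    {α : ℝ} (hα : 0 < α) {Ω : Set E} (hne : Ω.Nonempty) (hcomp : IsCompact Ω)
    (hΩ : StronglyConvexSet α Ω)
    (f : E → ℝ) (f' : E → E) {L : ℝ} (hL : 0 < L)
    (hdiff : ∀ x : E, HasFDerivAt f (innerSL ℝ (f' x)) x)
    (hsmooth : ∀ x y : E, |f x - f y - ⟪f' y, x - y⟫| ≤ L / 2 * ‖x - y‖ ^ 2)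
    {ε κ : ℝ} (hε : 0 < ε) (hκ : 0 < κ)
    {w wstar : E} (hw : w ∈ Ω) (hwstar : wstar ∈ Ω)
    (hgw : f' w ≠ 0)
    (hslqc : ∀ y : E, ‖y - wstar‖ ≤ ε / κ → ⟪f' w, y - w⟫ ≤ 0)
    {v : E} (hv : v ∈ Ω) (horacle : ∀ u ∈ Ω, ⟪f' w, v⟫ ≤ ⟪f' w, u⟫) :
    ∃ γ ∈ Set.Icc (0 : ℝ) 1,
      f (w + γ • (v - w)) ≤
        f w - min (ε * ‖f' w‖ / (2 * κ)) (α * ε * ‖f' w‖ ^ 2 / (8 * κ * L)) :=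
  frank_wolfe_slqc_decrease_general hα hΩ f f' hL hsmooth hε hκ hw hwstar hslqc hv horacle
end

section
/- Let E be a real inner product space, α > 0, and let Ω ⊆ E be a nonempty compact α-strongly convex set. Let f : E → ℝ be differentiable with gradient ∇f and L-smooth (L > 0). Consider Frank–Wolfe with exact line search: w_1 ∈ Ω and, for each s ≥ 1, v_s ∈ Ω with ⟨∇f(w_s), v_s⟩ ≤ ⟨∇f(w_s), u⟩ for all u ∈ Ω, and w_{s+1} ∈ Ω with f(w_{s+1}) ≤ f(w_s + γ(v_s − w_s)) for all γ ∈ [0,1]. Let k_s = sup_{u ∈ Ω} ⟨u − w_s, −∇f(w_s)⟩ denote the Frank–Wolfe gap at w_s. If there is c > 0 with ‖∇f(w_s)‖ ≥ c for all s, then for every t ≥ 1, min_{1 ≤ s ≤ t} k_s ≤ ( f(w_1) − inf_{w ∈ Ω} f(w) ) / ( t · min(1/2, αc/(8L)) ). -/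
open RealInnerProductSpace

/-!
Minimising the linear model `⟪g, ·⟫` over an `α`-strongly convex set lands far inside the
half-space it cuts off: moving the midpoint of `w` and the minimiser `v` by `(α/8)‖v - w‖²`
against `g` stays in the set, so the Frank–Wolfe gap `k = ⟪g, w - v⟫` dominates
`(α/4)‖g‖‖v - w‖²`. With `‖g‖ ≥ c` this bounds the curvature term of the smoothness estimate
by a multiple of `k`, so a line-search step decreases `f` by at least
`min (1/2) (αc/(8L)) · k`. Summing these decreases over `t` steps and bounding the total by
`f(w₁) - inf_Ω f` gives the rate for the smallest gap.
-/

section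

variable {E : Type*} [NormedAddCommGroup E] [InnerProductSpace ℝ E]

namespace StronglyConvexSet

variable {α : ℝ} {Ω : Set E}

theorem midpoint_add_mem_s18 (hΩ : StronglyConvexSet α Ω) {u v : E} (hu : u ∈ Ω) (hv : v ∈ Ω)
    {z : E} (hz : ‖z‖ ≤ α / 8 * ‖u - v‖ ^ 2) : (1 / 2 : ℝ) • u + (1 / 2 : ℝ) • v + z ∈ Ω := by
  refine hΩ u hu v hv (1 / 2) ⟨by norm_num, by norm_num⟩ _ ?_
  convert hz using 1
  · congr 1
    module
  · ring

theorem mul_norm_sq_le_inner_of_isMinOn (hα : 0 ≤ α) (hΩ : StronglyConvexSet α Ω) {g w v : E}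
    (hw : w ∈ Ω) (hv : v ∈ Ω) (hmin : IsMinOn (fun u => ⟪g, u⟫) Ω v) :
    α * ‖g‖ / 4 * ‖v - w‖ ^ 2 ≤ ⟪g, w - v⟫ := by
  rcases eq_or_ne g 0 with rfl | hg
  · simp
  have hg' : ‖g‖ ≠ 0 := norm_ne_zero_iff.2 hg
  set r := α / 8 * ‖w - v‖ ^ 2 with hr_def
  have hmem : (1 / 2 : ℝ) • w + (1 / 2 : ℝ) • v + (-(r / ‖g‖)) • g ∈ Ω :=
    hΩ.midpoint_add_mem_s18 hw hv (by
      rw [norm_smul, norm_neg, Real.norm_of_nonneg (by positivity), div_mul_cancel₀ _ hg'])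
  have hle := isMinOn_iff.1 hmin _ hmem
  have hrg : r / ‖g‖ * ‖g‖ ^ 2 = α / 8 * ‖g‖ * ‖v - w‖ ^ 2 := by
    rw [hr_def, norm_sub_rev]
    field_simp
  simp only [inner_add_right, inner_smul_right, real_inner_self_eq_norm_sq, neg_mul, hrg] at hle
  rw [inner_sub_right]
  linarith

end StronglyConvexSet

theorem sSup_inner_sub_neg_eq_of_isMinOn {Ω : Set E} {g v : E} (hv : v ∈ Ω)
    (hmin : IsMinOn (fun u => ⟪g, u⟫) Ω v) (w : E) :
    sSup ((fun u => ⟪u - w, -g⟫) '' Ω) = ⟪g, w - v⟫ := by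
  have hswap (u : E) : ⟪u - w, -g⟫ = ⟪g, w - u⟫ := by
    rw [inner_neg_right, real_inner_comm, ← inner_neg_right, neg_sub]
  refine IsGreatest.csSup_eq ⟨⟨v, hv, hswap v⟩, ?_⟩
  rintro _ ⟨u, hu, rfl⟩
  show ⟪u - w, -g⟫ ≤ _
  rw [hswap, inner_sub_right, inner_sub_right]
  linarith [isMinOn_iff.1 hmin u hu]

theorem exists_mem_Icc_min_le_sub {μ L : ℝ} (hμ : 0 < μ) (hL : 0 < L) :
    ∃ γ ∈ Set.Icc (0 : ℝ) 1, min (1 / 2) (μ / (2 * L)) ≤ γ - L * γ ^ 2 / (2 * μ) := by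
  rcases le_total μ L with h | h
  · refine ⟨μ / L, ⟨by positivity, (div_le_one hL).2 h⟩, (min_le_right _ _).trans_eq ?_⟩
    field_simp
    ring
  · refine ⟨1, ⟨zero_le_one, le_rfl⟩, (min_le_left _ _).trans ?_⟩
    rw [one_pow, mul_one, le_sub_comm, div_le_iff₀ (by positivity)]
    linarith

theorem mul_le_sub_of_lineSearch {f : E → ℝ} {f' : E → E} {L μ : ℝ} (hL : 0 < L) (hμ : 0 < μ)
    (hsmooth : ∀ x y : E, |f x - f y - ⟪f' y, x - y⟫| ≤ L / 2 * ‖x - y‖ ^ 2) {w v w' : E}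
    (hcurv : μ * ‖v - w‖ ^ 2 ≤ ⟪f' w, w - v⟫)
    (hls : ∀ γ ∈ Set.Icc (0 : ℝ) 1, f w' ≤ f (w + γ • (v - w))) :
    min (1 / 2) (μ / (2 * L)) * ⟪f' w, w - v⟫ ≤ f w - f w' := by
  set k := ⟪f' w, w - v⟫
  have hk : 0 ≤ k := (by positivity : 0 ≤ μ * ‖v - w‖ ^ 2).trans hcurv
  obtain ⟨γ, hγ, hρ⟩ := exists_mem_Icc_min_le_sub hμ hL
  have hdescent : f (w + γ • (v - w)) ≤ f w - γ * k + L / 2 * γ ^ 2 * ‖v - w‖ ^ 2 := by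
    have hsm := (abs_le.1 (hsmooth (w + γ • (v - w)) w)).2
    have hdir : ⟪f' w, v - w⟫ = -k := by rw [← neg_sub, inner_neg_right]
    rw [add_sub_cancel_left, inner_smul_right, hdir, norm_smul, Real.norm_of_nonneg hγ.1,
      mul_pow] at hsm
    linarith
  have hcurv' : L / 2 * γ ^ 2 * ‖v - w‖ ^ 2 ≤ L * γ ^ 2 / (2 * μ) * k :=
    calc L / 2 * γ ^ 2 * ‖v - w‖ ^ 2 = L * γ ^ 2 / (2 * μ) * (μ * ‖v - w‖ ^ 2) := by
          field_simp
      _ ≤ L * γ ^ 2 / (2 * μ) * k := by gcongr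
  nlinarith [mul_le_mul_of_nonneg_right hρ hk, hls γ hγ]

open Finset in
theorem exists_mem_Ico_mul_le_sub {a F : ℕ → ℝ} {m n : ℕ} (hmn : m < n)
    (h : ∀ s ∈ Ico m n, a s ≤ F s - F (s + 1)) :
    ∃ s ∈ Ico m n, ((n - m : ℕ) : ℝ) * a s ≤ F m - F n := by
  obtain ⟨s, hs, hmin⟩ := exists_min_image (Ico m n) a (nonempty_Ico.2 hmn)
  refine ⟨s, hs, ?_⟩
  calc ((n - m : ℕ) : ℝ) * a s = ∑ _ ∈ Ico m n, a s := by simp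
    _ ≤ ∑ i ∈ Ico m n, a i := sum_le_sum hmin
    _ ≤ ∑ i ∈ Ico m n, (F i - F (i + 1)) := sum_le_sum h
    _ = F m - F n := by
      rw [← neg_sub (F n), ← sum_Ico_sub F hmn.le, ← sum_neg_distrib]
      simp

end

theorem frank_wolfe_nonconvex_O_inv_t_general
    {E : Type*} [NormedAddCommGroup E] [InnerProductSpace ℝ E]
    {α : ℝ} (hα : 0 < α) {Ω : Set E} (hcomp : IsCompact Ω)
    (hΩ : StronglyConvexSet α Ω)
    (f : E → ℝ) (f' : E → E) {L : ℝ} (hL : 0 < L)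
    (hdiff : ∀ x : E, HasFDerivAt f (innerSL ℝ (f' x)) x)
    (hsmooth : ∀ x y : E, |f x - f y - ⟪f' y, x - y⟫| ≤ L / 2 * ‖x - y‖ ^ 2)
    (w v : ℕ → E)
    (hwmem : ∀ s : ℕ, 1 ≤ s → w s ∈ Ω)
    (hvmem : ∀ s : ℕ, 1 ≤ s → v s ∈ Ω)
    (horacle : ∀ s : ℕ, 1 ≤ s → ∀ u ∈ Ω, ⟪f' (w s), v s⟫ ≤ ⟪f' (w s), u⟫)
    (hls : ∀ s : ℕ, 1 ≤ s → ∀ γ ∈ Set.Icc (0 : ℝ) 1,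
      f (w (s + 1)) ≤ f (w s + γ • (v s - w s)))
    {c : ℝ} (hc : 0 < c) (hgrad : ∀ s : ℕ, 1 ≤ s → c ≤ ‖f' (w s)‖) :
    ∀ t : ℕ, 1 ≤ t → ∃ s : ℕ, 1 ≤ s ∧ s ≤ t ∧
      sSup ((fun u => ⟪u - w s, -(f' (w s))⟫) '' Ω) ≤
        (f (w 1) - sInf (f '' Ω)) / ((t : ℝ) * min (1 / 2) (α * c / (8 * L))) := by
  intro t ht
  have hfc : Continuous f := continuous_iff_continuousAt.2 fun x => (hdiff x).continuousAt
  have hdecrease : ∀ s ∈ Finset.Ico 1 (t + 1), min (1 / 2) (α * c / (8 * L)) *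
      ⟪f' (w s), w s - v s⟫ ≤ f (w s) - f (w (s + 1)) := by
    intro s hs
    have hs1 : 1 ≤ s := (Finset.mem_Ico.1 hs).1
    have hcurv : α * c / 4 * ‖v s - w s‖ ^ 2 ≤ ⟪f' (w s), w s - v s⟫ :=
      le_trans (by gcongr; exact hgrad s hs1) <| hΩ.mul_norm_sq_le_inner_of_isMinOn hα.le
        (hwmem s hs1) (hvmem s hs1) (isMinOn_iff.2 (horacle s hs1))
    convert mul_le_sub_of_lineSearch hL (by positivity) hsmooth hcurv (hls s hs1) using 3
    ring
  obtain ⟨s, hs, hrate⟩ := exists_mem_Ico_mul_le_sub (by omega) hdecrease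
  obtain ⟨hs1, hst⟩ := Finset.mem_Ico.1 hs
  refine ⟨s, hs1, by omega, ?_⟩
  have hinf : sInf (f '' Ω) ≤ f (w (t + 1)) :=
    csInf_le (hcomp.image hfc).bddBelow ⟨_, hwmem (t + 1) (by omega), rfl⟩
  have hdenom : 0 < (t : ℝ) * min (1 / 2) (α * c / (8 * L)) :=
    mul_pos (Nat.cast_pos.2 ht) (lt_min (by norm_num) (by positivity))
  rw [sSup_inner_sub_neg_eq_of_isMinOn (hvmem s hs1) (isMinOn_iff.2 (horacle s hs1)),
    le_div_iff₀ hdenom]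
  simp only [Nat.add_sub_cancel] at hrate
  linarith

/-- Deterministic core of Theorem 4: for a smooth (possibly non-convex) objective over a
compact `α`-strongly convex set, Frank–Wolfe with exact line search (with gradient norms
bounded below by `c > 0`) drives the minimum Frank–Wolfe gap over the first `t` iterations
below `(f(w₁) − inf_Ω f) / (t·min(1/2, αc/(8L)))`. -/
theorem frank_wolfe_nonconvex_O_inv_t
    {E : Type*} [NormedAddCommGroup E] [InnerProductSpace ℝ E]
    {α : ℝ} (hα : 0 < α) {Ω : Set E} (hne : Ω.Nonempty) (hcomp : IsCompact Ω)
    (hΩ : StronglyConvexSet α Ω)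
    (f : E → ℝ) (f' : E → E) {L : ℝ} (hL : 0 < L)
    (hdiff : ∀ x : E, HasFDerivAt f (innerSL ℝ (f' x)) x)
    (hsmooth : ∀ x y : E, |f x - f y - ⟪f' y, x - y⟫| ≤ L / 2 * ‖x - y‖ ^ 2)
    (w v : ℕ → E)
    (hwmem : ∀ s : ℕ, 1 ≤ s → w s ∈ Ω)
    (hvmem : ∀ s : ℕ, 1 ≤ s → v s ∈ Ω)
    (horacle : ∀ s : ℕ, 1 ≤ s → ∀ u ∈ Ω, ⟪f' (w s), v s⟫ ≤ ⟪f' (w s), u⟫)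
    (hls : ∀ s : ℕ, 1 ≤ s → ∀ γ ∈ Set.Icc (0 : ℝ) 1,
      f (w (s + 1)) ≤ f (w s + γ • (v s - w s)))
    {c : ℝ} (hc : 0 < c) (hgrad : ∀ s : ℕ, 1 ≤ s → c ≤ ‖f' (w s)‖) :
    ∀ t : ℕ, 1 ≤ t → ∃ s : ℕ, 1 ≤ s ∧ s ≤ t ∧
      sSup ((fun u => ⟪u - w s, -(f' (w s))⟫) '' Ω) ≤
        (f (w 1) - sInf (f '' Ω)) / ((t : ℝ) * min (1 / 2) (α * c / (8 * L))) :=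
  frank_wolfe_nonconvex_O_inv_t_general hα hcomp hΩ f f' hL hdiff hsmooth w v hwmem hvmem horacle
    hls hc hgrad
end

section
/- Let E be a real inner product space and let Ω ⊆ E be a nonempty convex set of diameter at most D (i.e., ‖u − v‖ ≤ D for all u, v ∈ Ω). Let f : E → ℝ be convex, differentiable with gradient ∇f, and L-smooth (L ≥ 0). Consider standard Frank–Wolfe with predefined step sizes: w_0 ∈ Ω and, for t ≥ 1, γ_t = 2/(t+1), v_t ∈ Ω with ⟨∇f(w_{t−1}), v_t⟩ ≤ ⟨∇f(w_{t−1}), u⟩ for all u ∈ Ω, and w_t = (1−γ_t)w_{t−1} + γ_t v_t. Then for every w* ∈ Ω and every t ≥ 1, f(w_t) − f(w*) ≤ (2L/(t(t+1)))·Σ_{i=1}^{t} ‖v_i − w_{i−1}‖² ≤ 2LD²/(t+1). -/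
open RealInnerProductSpace

/-!
Convexity and differentiability give `⟪∇f(w), w* - w⟫ ≤ f(w*) - f(w)`, so the oracle choice
of `v_t` and the smoothness upper bound yield, for `h_t = f(w_t) - f(w*)`,
`h_t ≤ (1 - γ_t) h_{t-1} + (L/2) γ_t² ‖v_t - w_{t-1}‖²`. For `γ_t = 2/(t+1)` the weight
`t(t+1)` turns this into `t(t+1) h_t ≤ (t-1)t h_{t-1} + 2L‖v_t - w_{t-1}‖²`, which telescopes.
The iterates stay in `Ω`, so each summand is at most `D²`.
-/

theorem ConvexOn.apply_sub_le_sub_of_hasFDerivAt {E : Type*} [NormedAddCommGroup E]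
    [NormedSpace ℝ E] {s : Set E} {f : E → ℝ} {φ : E →L[ℝ] ℝ} {x y : E}
    (hf : ConvexOn ℝ s f) (hx : x ∈ s) (hy : y ∈ s) (hφ : HasFDerivAt f φ x) :
    φ (y - x) ≤ f y - f x := by
  have hline : HasDerivAt (f ∘ AffineMap.lineMap x y) (φ (y - x)) (0 : ℝ) := by
    rw [← AffineMap.lineMap_apply_zero x y (k := ℝ)] at hφ
    exact hφ.comp_hasDerivAt 0 AffineMap.hasDerivAt_lineMap
  simpa [slope] using (hf.comp_affineMap (AffineMap.lineMap x y)).le_slope_of_hasDerivAt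
    (by simpa using hx) (by simpa using hy) zero_lt_one hline

theorem Convex.mem_of_frankWolfe {E : Type*} [AddCommGroup E] [Module ℝ E] {Ω : Set E}
    (hΩ : Convex ℝ Ω) {γ : ℕ → ℝ} (hγ : ∀ t, 1 ≤ t → γ t ∈ Set.Icc 0 1) {w v : ℕ → E}
    (hw0 : w 0 ∈ Ω) (hv : ∀ t, 1 ≤ t → v t ∈ Ω)
    (hw : ∀ t, 1 ≤ t → w t = (1 - γ t) • w (t - 1) + γ t • v t) (t : ℕ) : w t ∈ Ω := by
  induction t with
  | zero => exact hw0
  | succ n ih =>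
    have hn : 1 ≤ n + 1 := by omega
    obtain ⟨hγ0, hγ1⟩ := hγ _ hn
    rw [hw _ hn]
    exact hΩ ih (hv _ hn) (by linarith) hγ0 (by ring)

theorem frankWolfe_weighted_step_le {t a b B L : ℝ} (ht : 0 ≤ t) (hLB : 0 ≤ L * B)
    (h : b ≤ (1 - 2 / (t + 1)) * a + L / 2 * (2 / (t + 1)) ^ 2 * B) :
    t * (t + 1) * b ≤ (t - 1) * t * a + 2 * L * B := by
  have hrhs : t * (t + 1) * ((1 - 2 / (t + 1)) * a + L / 2 * (2 / (t + 1)) ^ 2 * B)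
      = (t - 1) * t * a + 2 * L * B * (t / (t + 1)) := by
    field_simp
    ring
  have hfrac : t / (t + 1) ≤ 1 := by rw [div_le_one (by positivity)]; linarith
  calc t * (t + 1) * b
      ≤ t * (t + 1) * ((1 - 2 / (t + 1)) * a + L / 2 * (2 / (t + 1)) ^ 2 * B) := by gcongr
    _ = (t - 1) * t * a + 2 * L * B * (t / (t + 1)) := hrhs
    _ ≤ (t - 1) * t * a + 2 * L * B := by nlinarith

section
variable {E : Type*} [NormedAddCommGroup E] [InnerProductSpace ℝ E] {f : E → ℝ} {f' : E → E}
  {L : ℝ}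

theorem frankWolfe_step_sub_le
    (hsmooth : ∀ x y : E, f x - f y - ⟪f' y, x - y⟫ ≤ L / 2 * ‖x - y‖ ^ 2) {w v u : E} {γ : ℝ}
    (hγ : 0 ≤ γ) (hgrad : ⟪f' w, u - w⟫ ≤ f u - f w) (horacle : ⟪f' w, v⟫ ≤ ⟪f' w, u⟫) :
    f ((1 - γ) • w + γ • v) - f u ≤ (1 - γ) * (f w - f u) + L / 2 * γ ^ 2 * ‖v - w‖ ^ 2 := by
  have hmove : (1 - γ) • w + γ • v - w = γ • (v - w) := by module
  have hupper := hsmooth ((1 - γ) • w + γ • v) w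
  rw [hmove, real_inner_smul_right, norm_smul, Real.norm_eq_abs, abs_of_nonneg hγ, mul_pow]
    at hupper
  have hdescent : ⟪f' w, v - w⟫ ≤ f u - f w := by
    rw [inner_sub_right] at hgrad ⊢
    linarith
  nlinarith [mul_le_mul_of_nonneg_left hdescent hγ]

theorem frankWolfe_mul_sub_le_sum
    (hsmooth : ∀ x y : E, f x - f y - ⟪f' y, x - y⟫ ≤ L / 2 * ‖x - y‖ ^ 2) (hL : 0 ≤ L)
    {w v : ℕ → E} {u : E} (hgrad : ∀ x, ⟪f' x, u - x⟫ ≤ f u - f x)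
    (horacle : ∀ t : ℕ, 1 ≤ t → ⟪f' (w (t - 1)), v t⟫ ≤ ⟪f' (w (t - 1)), u⟫)
    (hw : ∀ t : ℕ, 1 ≤ t →
      w t = (1 - 2 / ((t : ℝ) + 1)) • w (t - 1) + (2 / ((t : ℝ) + 1)) • v t) (t : ℕ) :
    (t : ℝ) * (t + 1) * (f (w t) - f u) ≤ 2 * L * ∑ i ∈ Finset.Icc 1 t, ‖v i - w (i - 1)‖ ^ 2 := by
  induction t with
  | zero => simp
  | succ n ih =>
    have hn : 1 ≤ n + 1 := by omega
    have hwn := hw _ hn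
    have hvn := horacle _ hn
    simp only [Nat.add_sub_cancel] at hwn hvn
    have hstep := frankWolfe_step_sub_le hsmooth (γ := 2 / ((n + 1 : ℕ) + 1)) (by positivity)
      (hgrad (w n)) hvn
    rw [← hwn] at hstep
    have hpot := frankWolfe_weighted_step_le (Nat.cast_nonneg (n + 1))
      (by positivity) hstep
    rw [Finset.sum_Icc_succ_top hn, Nat.add_sub_cancel, mul_add]
    push_cast at hpot ⊢
    linarith
end

theorem frank_wolfe_standard_rate_general
    {E : Type*} [NormedAddCommGroup E] [InnerProductSpace ℝ E]
    {Ω : Set E} (hΩ : Convex ℝ Ω)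
    {D : ℝ} (hdiam : ∀ u ∈ Ω, ∀ x ∈ Ω, ‖u - x‖ ≤ D)
    (f : E → ℝ) (f' : E → E) {L : ℝ} (hL : 0 ≤ L)
    (hconv : ConvexOn ℝ Set.univ f)
    (hdiff : ∀ x : E, HasFDerivAt f (innerSL ℝ (f' x)) x)
    (hsmooth : ∀ x y : E, |f x - f y - ⟪f' y, x - y⟫| ≤ L / 2 * ‖x - y‖ ^ 2)
    (w v : ℕ → E) (hw0 : w 0 ∈ Ω)
    (hvmem : ∀ t : ℕ, 1 ≤ t → v t ∈ Ω)
    (horacle : ∀ t : ℕ, 1 ≤ t → ∀ u ∈ Ω,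
      ⟪f' (w (t - 1)), v t⟫ ≤ ⟪f' (w (t - 1)), u⟫)
    (hw : ∀ t : ℕ, 1 ≤ t →
      w t = (1 - 2 / ((t : ℝ) + 1)) • w (t - 1) + (2 / ((t : ℝ) + 1)) • v t) :
    ∀ wstar ∈ Ω, ∀ t : ℕ, 1 ≤ t →
      f (w t) - f wstar ≤
          2 * L / ((t : ℝ) * ((t : ℝ) + 1)) * ∑ i ∈ Finset.Icc 1 t, ‖v i - w (i - 1)‖ ^ 2 ∧
        2 * L / ((t : ℝ) * ((t : ℝ) + 1)) * ∑ i ∈ Finset.Icc 1 t, ‖v i - w (i - 1)‖ ^ 2 ≤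
          2 * L * D ^ 2 / ((t : ℝ) + 1) := by
  intro wstar hwstar t ht
  have hgrad (x : E) : ⟪f' x, wstar - x⟫ ≤ f wstar - f x := by
    simpa using hconv.apply_sub_le_sub_of_hasFDerivAt trivial trivial (hdiff x)
  have hpot := frankWolfe_mul_sub_le_sum (fun x y => (abs_le.mp (hsmooth x y)).2) hL hgrad
    (fun t ht => horacle t ht wstar hwstar) hw t
  have hwmem := hΩ.mem_of_frankWolfe (fun t _ => ⟨by positivity, by
    rw [div_le_one (by positivity)]; norm_cast; omega⟩) hw0 hvmem hw
  have hsum : ∑ i ∈ Finset.Icc 1 t, ‖v i - w (i - 1)‖ ^ 2 ≤ t * D ^ 2 := by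
    simpa using Finset.sum_le_card_nsmul _ _ _ fun i hi =>
      pow_le_pow_left₀ (norm_nonneg _) (hdiam _ (hvmem i (Finset.mem_Icc.mp hi).1) _ (hwmem _)) 2
  have htpos : (0 : ℝ) < t * (t + 1) := by positivity
  constructor
  · rwa [div_mul_eq_mul_div, le_div_iff₀ htpos, mul_comm]
  · calc 2 * L / (t * (t + 1)) * ∑ i ∈ Finset.Icc 1 t, ‖v i - w (i - 1)‖ ^ 2
        ≤ 2 * L / (t * (t + 1)) * (t * D ^ 2) := by gcongr
      _ = 2 * L * D ^ 2 / (t + 1) := by field_simp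

/-- Standard `O(1/t)` guarantee for Frank–Wolfe with step sizes `γ_t = 2/(t+1)` on smooth
convex objectives over a convex set of diameter at most `D`:
`f(w_t) − f(w*) ≤ (2L/(t(t+1)))·Σ_{i=1}^{t} ‖v_i − w_{i−1}‖² ≤ 2LD²/(t+1)`. -/
theorem frank_wolfe_standard_rate
    {E : Type*} [NormedAddCommGroup E] [InnerProductSpace ℝ E]
    {Ω : Set E} (hne : Ω.Nonempty) (hΩ : Convex ℝ Ω)
    {D : ℝ} (hdiam : ∀ u ∈ Ω, ∀ x ∈ Ω, ‖u - x‖ ≤ D)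
    (f : E → ℝ) (f' : E → E) {L : ℝ} (hL : 0 ≤ L)
    (hconv : ConvexOn ℝ Set.univ f)
    (hdiff : ∀ x : E, HasFDerivAt f (innerSL ℝ (f' x)) x)
    (hsmooth : ∀ x y : E, |f x - f y - ⟪f' y, x - y⟫| ≤ L / 2 * ‖x - y‖ ^ 2)
    (w v : ℕ → E) (hw0 : w 0 ∈ Ω)
    (hvmem : ∀ t : ℕ, 1 ≤ t → v t ∈ Ω)
    (horacle : ∀ t : ℕ, 1 ≤ t → ∀ u ∈ Ω,
      ⟪f' (w (t - 1)), v t⟫ ≤ ⟪f' (w (t - 1)), u⟫)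
    (hw : ∀ t : ℕ, 1 ≤ t →
      w t = (1 - 2 / ((t : ℝ) + 1)) • w (t - 1) + (2 / ((t : ℝ) + 1)) • v t) :
    ∀ wstar ∈ Ω, ∀ t : ℕ, 1 ≤ t →
      f (w t) - f wstar ≤
          2 * L / ((t : ℝ) * ((t : ℝ) + 1)) * ∑ i ∈ Finset.Icc 1 t, ‖v i - w (i - 1)‖ ^ 2 ∧
        2 * L / ((t : ℝ) * ((t : ℝ) + 1)) * ∑ i ∈ Finset.Icc 1 t, ‖v i - w (i - 1)‖ ^ 2 ≤
          2 * L * D ^ 2 / ((t : ℝ) + 1) :=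
  frank_wolfe_standard_rate_general hΩ hdiam f f' hL hconv hdiff hsmooth w v hw0 hvmem horacle hw
end
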